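/- arXiv:1811.07424 — 7 statements merged into one kernel-verified Lean document; each statement's English description precedes it below -/
import Mathlib

section
/- Let θ ∈ (0,1) be irrational. For t ∈ [0,1) define v_t ∈ {0,1}^{ℕ₀} by v_t(n) = 1 if and only if t + nθ (mod 1) ∈ [1−θ, 1), and let S be the closure of {v_t : t ∈ [0,1)} in the product topology on {0,1}^{ℕ₀}. For τ ∈ S and k ∈ ℕ set r_k(τ) = #{ 0 ≤ i ≤ k−1 : τ(i) = 1 }. Then there exists an integer C > 1 such that for every τ ∈ S and every k ∈ ℕ, |r_k(τ) − k·θ| ≤ C. -/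
/-!
The count of ones in the first `k` letters of the coding sequence `v_t` telescopes to
`⌊t + kθ⌋ - ⌊t⌋`, so it differs from `kθ` by `fract t - fract (t + kθ)`, which lies in `(-1, 1)`.
The bound `≤ 1` is a closed condition on `τ`, since `r_k` depends on finitely many coordinates,
so it passes to the closure `S`.
-/

open Set Filter
noncomputable section

/-- The binary coding sequence of `t` under the rotation by `θ`:
`v_t(n) = 1` iff `t + nθ (mod 1) ∈ [1−θ, 1)`. -/
def vseq (θ t : ℝ) : ℕ → Bool := fun n => decide (1 - θ ≤ Int.fract (t + n * θ))

/-- `S`: the closure of `{v_t : t ∈ [0,1)}` in the product topology on `{0,1}^ℕ₀`. -/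
def Sset (θ : ℝ) : Set (ℕ → Bool) :=
  closure { v | ∃ t ∈ Set.Ico (0 : ℝ) 1, v = vseq θ t }

/-- `r_k(τ) = #{ 0 ≤ i ≤ k−1 : τ(i) = 1 }`. -/
def rk (τ : ℕ → Bool) (k : ℕ) : ℕ := ((Finset.range k).filter fun i => τ i = true).card

theorem Int.floor_add_eq_floor_add_ite {θ : ℝ} (h0 : 0 ≤ θ) (h1 : θ ≤ 1) (x : ℝ) :
    ⌊x + θ⌋ = ⌊x⌋ + if 1 - θ ≤ Int.fract x then 1 else 0 := by
  have hfx : (⌊x⌋ : ℝ) + Int.fract x = x := Int.floor_add_fract x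
  have := Int.fract_nonneg x
  have := Int.fract_lt_one x
  split_ifs
  · rw [Int.floor_eq_iff]
    push_cast
    constructor <;> linarith
  · rw [add_zero, Int.floor_eq_iff]
    constructor <;> linarith

theorem rk_eq_sum_ite (τ : ℕ → Bool) (k : ℕ) :
    rk τ k = ∑ i ∈ Finset.range k, if τ i = true then 1 else 0 :=
  Finset.card_filter _ _

theorem rk_vseq {θ : ℝ} (h0 : 0 ≤ θ) (h1 : θ ≤ 1) (t : ℝ) (k : ℕ) :
    (rk (vseq θ t) k : ℤ) = ⌊t + k * θ⌋ - ⌊t⌋ := by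
  have hstep : ∀ i : ℕ, (if vseq θ t i = true then 1 else 0 : ℤ)
      = ⌊t + (i + 1 : ℕ) * θ⌋ - ⌊t + i * θ⌋ := by
    intro i
    rw [Nat.cast_succ, add_one_mul, ← add_assoc, Int.floor_add_eq_floor_add_ite h0 h1]
    simp [vseq]
  rw [rk_eq_sum_ite, Nat.cast_sum, Finset.sum_congr rfl fun i _ => by push_cast; exact hstep i,
    Finset.sum_range_sub (fun n : ℕ => ⌊t + n * θ⌋)]
  simp

theorem abs_rk_vseq_sub_lt_one {θ : ℝ} (h0 : 0 ≤ θ) (h1 : θ ≤ 1) (t : ℝ) (k : ℕ) :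
    |(rk (vseq θ t) k : ℝ) - k * θ| < 1 := by
  have hcast : (rk (vseq θ t) k : ℝ) = ⌊t + k * θ⌋ - ⌊t⌋ := by
    exact_mod_cast rk_vseq h0 h1 t k
  have hdiff : (rk (vseq θ t) k : ℝ) - k * θ = Int.fract t - Int.fract (t + k * θ) := by
    rw [hcast, Int.fract, Int.fract]
    ring
  rw [hdiff, abs_sub_lt_iff]
  have := Int.fract_nonneg t
  have := Int.fract_lt_one t
  have := Int.fract_nonneg (t + k * θ)
  have := Int.fract_lt_one (t + k * θ)
  constructor <;> linarith

theorem continuous_rk (k : ℕ) : Continuous fun τ : ℕ → Bool => (rk τ k : ℝ) := by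
  simp_rw [rk_eq_sum_ite, Nat.cast_sum, Nat.cast_ite, Nat.cast_one, Nat.cast_zero]
  exact continuous_finsetSum _ fun i _ =>
    (continuous_of_discreteTopology (f := fun b : Bool => if b = true then (1 : ℝ) else 0)).comp
      (continuous_apply i)

theorem isClosed_setOf_abs_rk_sub_le (θ C : ℝ) :
    IsClosed {τ : ℕ → Bool | ∀ k : ℕ, |(rk τ k : ℝ) - k * θ| ≤ C} := by
  simp_rw [Set.ofPred_forall]
  exact isClosed_iInter fun k =>
    isClosed_le ((continuous_rk k).sub continuous_const).abs continuous_const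

theorem abs_rk_sub_le_one_of_mem_Sset {θ : ℝ} (h0 : 0 ≤ θ) (h1 : θ ≤ 1) {τ : ℕ → Bool}
    (hτ : τ ∈ Sset θ) (k : ℕ) : |(rk τ k : ℝ) - k * θ| ≤ 1 := by
  refine closure_minimal ?_ (isClosed_setOf_abs_rk_sub_le θ 1) hτ k
  rintro _ ⟨t, -, rfl⟩ k
  exact (abs_rk_vseq_sub_lt_one h0 h1 t k).le

theorem stmt9_general (θ : ℝ) (hθ : θ ∈ Set.Ioo (0 : ℝ) 1) :
    ∃ C : ℕ, 1 < C ∧ ∀ τ ∈ Sset θ, ∀ k : ℕ, |(rk τ k : ℝ) - k * θ| ≤ C :=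
  ⟨2, one_lt_two, fun _ hτ k => by
    exact_mod_cast (abs_rk_sub_le_one_of_mem_Sset hθ.1.le hθ.2.le hτ k).trans one_le_two⟩

/-- There is an integer `C > 1` with `|r_k(τ) − kθ| ≤ C` for all `τ ∈ S`
and all `k`. -/
theorem stmt9 (θ : ℝ) (hθ : θ ∈ Set.Ioo (0 : ℝ) 1) (hirr : Irrational θ) :
    ∃ C : ℕ, 1 < C ∧ ∀ τ ∈ Sset θ, ∀ k : ℕ, |(rk τ k : ℝ) - k * θ| ≤ C :=
  stmt9_general θ hθ
end
end

section
/- Fix integers m₁ > m₂ ≥ 2 with θ = log m₂/log m₁ irrational. For t ∈ [0,1) define Φ_t : [0,1]² → [0,1]² by Φ_t(z₁,z₂) = (m₁z₁ mod 1, m₂z₂ mod 1) if t ∈ [1−θ,1), and Φ_t(z₁,z₂) = (z₁, m₂z₂ mod 1) if t ∈ [0,1−θ). If ℓ is a line with slope m₁^t passing through [0,1]², then Φ_t(ℓ ∩ [0,1]²) is contained in a finite union of lines of slope m₁^{R_θ(t)}, where R_θ(t) = t + θ (mod 1). -/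
/-!
Write `T_m x = m x - k` with the digit `k = ⌊m x⌋ ∈ {0, …, m}` for `x ∈ [0,1]`. Applying
`x ↦ a x - k`, `y ↦ c y - j` to the line `y = u x + b` gives the line of slope `c u / a` and
intercept `c b + (c u / a) k - j`. Since `m₁^θ = m₂`, the new slope `m₂ m₁^t / m₁` (resp.
`m₂ m₁^t`) is `m₁^{t+θ-1}` (resp. `m₁^{t+θ}`), which is `m₁^{R_θ(t)}` in the respective case,
and the intercepts range over the finitely many digit pairs `(k, j)`.
-/

open Set Filter
noncomputable section

/-- The map `Φ_t` of `[0,1]²`: apply `T_{m₁} × T_{m₂}` if `t ∈ [1−θ,1)`,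
and `id × T_{m₂}` if `t ∈ [0,1−θ)`. -/
def phiMap (m₁ m₂ : ℕ) (θ t : ℝ) (z : ℝ × ℝ) : ℝ × ℝ :=
  if 1 - θ ≤ t then (Int.fract ((m₁ : ℝ) * z.1), Int.fract ((m₂ : ℝ) * z.2))
  else (z.1, Int.fract ((m₂ : ℝ) * z.2))

/-- The (non-vertical) line of slope `u` and intercept `b`. -/
def lineSl (u b : ℝ) : Set (ℝ × ℝ) := { p | p.2 = u * p.1 + b }

theorem exists_fin_subset_iUnion {ι α β : Type*} [Finite ι] {S : Set β} (F : α → Set β)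
    (f : ι → α) (h : S ⊆ ⋃ i, F (f i)) : ∃ (N : ℕ) (g : Fin N → α), S ⊆ ⋃ i, F (g i) := by
  obtain ⟨N, ⟨e⟩⟩ := Finite.exists_equiv_fin ι
  exact ⟨N, fun i => f (e.symm i), by rwa [e.symm.surjective.iUnion_comp (fun i => F (f i))]⟩

theorem exists_fract_natCast_mul_eq (m : ℕ) {x : ℝ} (h0 : 0 ≤ x) (h1 : x ≤ 1) :
    ∃ k : Fin (m + 1), Int.fract ((m : ℝ) * x) = m * x - (k : ℕ) := by
  have hmx : 0 ≤ (m : ℝ) * x := by positivity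
  have hk : ⌊(m : ℝ) * x⌋₊ < m + 1 :=
    Nat.lt_succ_of_le (Nat.floor_le_of_le (mul_le_of_le_one_right m.cast_nonneg h1))
  exact ⟨⟨_, hk⟩, by rw [Int.fract, ← natCast_floor_eq_intCast_floor hmx]⟩

theorem mem_lineSl_of_affine {u b a c k j : ℝ} {p q : ℝ × ℝ} (hp : p ∈ lineSl u b) (ha : a ≠ 0)
    (hq₁ : q.1 = a * p.1 - k) (hq₂ : q.2 = c * p.2 - j) :
    q ∈ lineSl (c * u / a) (c * b + c * u / a * k - j) := by
  simp only [lineSl, mem_ofPred_eq] at hp ⊢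
  rw [hq₁, hq₂, hp]
  field_simp
  ring

theorem phiMap_mem_lineSl {m₁ m₂ : ℕ} {θ t b : ℝ} (hm₁ : 0 < m₁) (hθ : θ ∈ Ico 0 1)
    (hθm : (m₁ : ℝ) ^ θ = m₂) (ht : t ∈ Ico 0 1) {z : ℝ × ℝ}
    (hz : z ∈ lineSl ((m₁ : ℝ) ^ t) b ∩ Icc (0, 0) (1, 1)) :
    ∃ (k : Fin (m₁ + 1)) (j : Fin (m₂ + 1)),
      phiMap m₁ m₂ θ t z ∈ lineSl ((m₁ : ℝ) ^ Int.fract (t + θ))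
        (m₂ * b + (m₁ : ℝ) ^ Int.fract (t + θ) * (k : ℕ) - (j : ℕ)) := by
  obtain ⟨hz, ⟨h0₁, h0₂⟩, ⟨h1₁, h1₂⟩⟩ := hz
  have hm₁' : (0 : ℝ) < m₁ := Nat.cast_pos.mpr hm₁
  obtain ⟨j, hj⟩ := exists_fract_natCast_mul_eq m₂ h0₂ h1₂
  by_cases hcase : 1 - θ ≤ t
  · obtain ⟨k, hk⟩ := exists_fract_natCast_mul_eq m₁ h0₁ h1₁
    have hslope : (m₁ : ℝ) ^ Int.fract (t + θ) = m₂ * (m₁ : ℝ) ^ t / m₁ := by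
      have hfloor : ⌊t + θ⌋ = 1 := by
        rw [Int.floor_eq_iff]
        constructor <;> push_cast <;> linarith [ht.2, hθ.2]
      rw [Int.fract, hfloor, Int.cast_one, Real.rpow_sub_one hm₁'.ne', Real.rpow_add hm₁', hθm,
        mul_comm]
    refine ⟨k, j, ?_⟩
    rw [phiMap, if_pos hcase, hslope]
    exact mem_lineSl_of_affine hz hm₁'.ne' hk hj
  · have hslope : (m₁ : ℝ) ^ Int.fract (t + θ) = m₂ * (m₁ : ℝ) ^ t / 1 := by
      rw [Int.fract_eq_self.mpr ⟨by linarith [ht.1, hθ.1], by linarith⟩, Real.rpow_add hm₁',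
        hθm, div_one, mul_comm]
    refine ⟨0, j, ?_⟩
    rw [phiMap, if_neg hcase, hslope]
    exact mem_lineSl_of_affine hz one_ne_zero (by simp) hj

theorem stmt11_general
    (m₁ m₂ : ℕ) (hm₂ : 2 ≤ m₂) (hm : m₂ < m₁)
    (θ : ℝ) (hθ : θ = Real.log m₂ / Real.log m₁)
    (t : ℝ) (ht : t ∈ Set.Ico (0 : ℝ) 1) (b : ℝ) :
    ∃ (N : ℕ) (bs : Fin N → ℝ),
      phiMap m₁ m₂ θ t '' (lineSl ((m₁ : ℝ) ^ t) b ∩ Set.Icc ((0 : ℝ), (0 : ℝ)) (1, 1)) ⊆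
        ⋃ i : Fin N, lineSl ((m₁ : ℝ) ^ Int.fract (t + θ)) (bs i) := by
  rw [Real.log_div_log] at hθ
  have hm₁ : (1 : ℝ) < m₁ := by exact_mod_cast (by omega : 1 < m₁)
  have hθm : (m₁ : ℝ) ^ θ = m₂ := by
    rw [hθ, Real.rpow_logb (by linarith) hm₁.ne' (by exact_mod_cast (by omega : 0 < m₂))]
  have hθ01 : θ ∈ Ico 0 1 := by
    rw [hθ, ← Real.logb_self_eq_one hm₁]
    exact ⟨Real.logb_nonneg hm₁ (by exact_mod_cast (by omega : 1 ≤ m₂)),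
      Real.logb_lt_logb hm₁ (by positivity) (by exact_mod_cast hm)⟩
  refine exists_fin_subset_iUnion (lineSl _) (fun kj : Fin (m₁ + 1) × Fin (m₂ + 1) =>
    m₂ * b + (m₁ : ℝ) ^ Int.fract (t + θ) * (kj.1 : ℕ) - (kj.2 : ℕ)) ?_
  rintro _ ⟨z, hz, rfl⟩
  obtain ⟨k, j, hkj⟩ := phiMap_mem_lineSl (by omega) hθ01 hθm ht hz
  exact mem_iUnion.mpr ⟨(k, j), hkj⟩

/-- `Φ_t` maps a line of slope `m₁^t` through `[0,1]²` into a finite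
union of lines of slope `m₁^{R_θ(t)}`, where `R_θ(t) = t + θ (mod 1)`. -/
theorem stmt11
    (m₁ m₂ : ℕ) (hm₂ : 2 ≤ m₂) (hm : m₂ < m₁)
    (θ : ℝ) (hθ : θ = Real.log m₂ / Real.log m₁) (hirr : Irrational θ)
    (t : ℝ) (ht : t ∈ Set.Ico (0 : ℝ) 1) (b : ℝ)
    (hmeets : (lineSl ((m₁ : ℝ) ^ t) b ∩ Set.Icc ((0 : ℝ), (0 : ℝ)) (1, 1)).Nonempty) :
    ∃ (N : ℕ) (bs : Fin N → ℝ),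
      phiMap m₁ m₂ θ t '' (lineSl ((m₁ : ℝ) ^ t) b ∩ Set.Icc ((0 : ℝ), (0 : ℝ)) (1, 1)) ⊆
        ⋃ i : Fin N, lineSl ((m₁ : ℝ) ^ Int.fract (t + θ)) (bs i) :=
  stmt11_general m₁ m₂ hm₂ hm θ hθ t ht b
end
end

section
/- Let m ≥ 2 and n ≥ 2 be integers, and for each i ∈ {0,…,n−1} let Γ_i ⊆ {0,…,m−1} be nonempty. For ω ∈ {0,…,n−1}^ℕ let π_m(F̃_ω) = {∑_{k=1}^∞ x_k m^{−k} : x_k ∈ Γ_{ω_k} for all k}. Then dim_H π_m(F̃_ω) = liminf_{k→∞} (∑_{i=1}^k log|Γ_{ω_i}|) / (k·log m); in particular dim_H π_m(F̃_ω) ≤ max_{i ∈ {0,…,n−1}} log|Γ_i| / log m. -/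
open Set Filter
open scoped ENNReal
noncomputable section

/-- Base-`m` expansion `∑_{k≥0} d k / m^(k+1)`. -/
def expandIn (m : ℕ) (d : ℕ → ℕ) : ℝ := ∑' k : ℕ, (d k : ℝ) / (m : ℝ) ^ (k + 1)

/-- The product set `π_m(F̃_ω) = { ∑ x_k m^{-k} : x_k ∈ Γ_{ω_k} }`. -/
def prodSet (m : ℕ) (Γ : ℕ → Set ℕ) (ω : ℕ → ℕ) : Set ℝ :=
  { x | ∃ d : ℕ → ℕ, (∀ k, d k ∈ Γ (ω k)) ∧ x = expandIn m d }

open MeasureTheory Topology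
open scoped NNReal

set_option linter.unusedSectionVars false

namespace Stmt12


/-- prefix value -/
def aval (m k : ℕ) (d : ℕ → ℕ) : ℝ := ∑ i ∈ Finset.range k, (d i : ℝ) / (m : ℝ) ^ (i + 1)

/-- prefix integer value -/
def ival (m k : ℕ) (d : ℕ → ℕ) : ℕ := ∑ i ∈ Finset.range k, d i * m ^ (k - 1 - i)

lemma aval_congr {m k : ℕ} {d d' : ℕ → ℕ} (h : ∀ i < k, d i = d' i) :
    aval m k d = aval m k d' := by
  unfold aval
  exact Finset.sum_congr rfl fun i hi => by rw [h i (Finset.mem_range.1 hi)]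

section Pre
variable {m : ℕ} (hm : 2 ≤ m)
include hm

lemma summable_digits {d : ℕ → ℕ} (hd : ∀ i, d i < m) :
    Summable (fun i : ℕ => (d i : ℝ) / (m : ℝ) ^ (i + 1)) := by
  have hm0 : (0:ℝ) < m := by exact_mod_cast (by omega : 0 < m)
  have h1 : (m:ℝ)⁻¹ < 1 := by
    rw [inv_lt_one_iff₀]; right; exact_mod_cast (by omega : 1 < m)
  have hg : Summable (fun i : ℕ => (m:ℝ) * (m⁻¹:ℝ) ^ (i+1)) := by
    apply Summable.mul_left
    exact (summable_geometric_of_lt_one (by positivity) h1).comp_injective (add_left_injective 1)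
  refine Summable.of_nonneg_of_le (fun i => by positivity) (fun i => ?_) hg
  rw [div_eq_mul_inv, ← inv_pow]
  have : (d i : ℝ) ≤ m := by exact_mod_cast (hd i).le
  exact mul_le_mul_of_nonneg_right this (by positivity)

lemma expand_mem_Icc {d : ℕ → ℕ} (hd : ∀ i, d i < m) (k : ℕ) :
    expandIn m d ∈ Icc (aval m k d) (aval m k d + ((m:ℝ)⁻¹) ^ k) := by
  have hm0 : (0:ℝ) < m := by exact_mod_cast (by omega : 0 < m)
  have hs := summable_digits hm hd
  have hsplit := Summable.sum_add_tsum_nat_add (f := fun i : ℕ => (d i : ℝ) / (m : ℝ) ^ (i + 1)) k hs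
  have htail0 : 0 ≤ ∑' i : ℕ, (d (i + k) : ℝ) / (m:ℝ) ^ (i + k + 1) :=
    tsum_nonneg fun i => by positivity
  have htail1 : (∑' i : ℕ, (d (i + k) : ℝ) / (m:ℝ) ^ (i + k + 1)) ≤ ((m:ℝ)⁻¹) ^ k := by
    have h1 : (m:ℝ)⁻¹ < 1 := by
      rw [inv_lt_one_iff₀]; right; exact_mod_cast (by omega : 1 < m)
    have hg : Summable (fun i : ℕ => ((m:ℝ) - 1) / (m:ℝ) ^ (k+1) * ((m:ℝ)⁻¹) ^ i) :=
      Summable.mul_left _ (summable_geometric_of_lt_one (by positivity) h1)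
    have hle : ∀ i : ℕ, (d (i + k) : ℝ) / (m:ℝ) ^ (i + k + 1)
        ≤ ((m:ℝ) - 1) / (m:ℝ) ^ (k+1) * ((m:ℝ)⁻¹) ^ i := by
      intro i
      have hdi : (d (i+k) : ℝ) ≤ (m:ℝ) - 1 := by
        have h' : ((d (i+k) : ℝ) + 1) ≤ m := by exact_mod_cast (hd (i+k) : d (i+k) + 1 ≤ m)
        linarith
      have hpow : (m:ℝ) ^ (i+k+1) = (m:ℝ)^(k+1) * (m:ℝ)^i := by
        rw [← pow_add]; congr 1; omega
      rw [hpow, inv_pow, ← div_eq_mul_inv, div_div]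
      gcongr
    calc (∑' i : ℕ, (d (i + k) : ℝ) / (m:ℝ) ^ (i + k + 1))
        ≤ ∑' i : ℕ, ((m:ℝ) - 1) / (m:ℝ) ^ (k+1) * ((m:ℝ)⁻¹) ^ i := by
          exact ((hs.comp_injective (add_left_injective k))).tsum_le_tsum hle hg
      _ = ((m:ℝ) - 1) / (m:ℝ) ^ (k+1) * (1 - (m:ℝ)⁻¹)⁻¹ := by
          rw [tsum_mul_left, tsum_geometric_of_lt_one (by positivity) h1]
      _ = ((m:ℝ)⁻¹) ^ k := by
          have hmne : (m:ℝ) - 1 ≠ 0 := by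
            have : (1:ℝ) < m := by exact_mod_cast (by omega : 1 < m)
            linarith
          have : (1 - (m:ℝ)⁻¹) = ((m:ℝ) - 1)/m := by field_simp
          rw [this, inv_pow]
          field_simp
          ring
  constructor
  · rw [expandIn, ← hsplit]; unfold aval; linarith
  · rw [expandIn, ← hsplit]; unfold aval; linarith

lemma aval_eq_ival (k : ℕ) (d : ℕ → ℕ) :
    aval m k d = (ival m k d : ℝ) / (m:ℝ) ^ k := by
  have hm0 : (0:ℝ) < m := by exact_mod_cast (by omega : 0 < m)
  unfold aval ival
  push_cast
  rw [Finset.sum_div]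
  refine Finset.sum_congr rfl fun i hi => ?_
  have hik : i < k := Finset.mem_range.1 hi
  have hpow : (m:ℝ) ^ (k - 1 - i) * (m:ℝ) ^ (i + 1) = (m:ℝ) ^ k := by
    rw [← pow_add]
    congr 1
    omega
  rw [div_eq_div_iff (by positivity) (by positivity)]
  nlinarith [hpow]

lemma ival_succ (k : ℕ) (d : ℕ → ℕ) :
    ival m (k+1) d = ival m k d * m + d k := by
  unfold ival
  rw [Finset.sum_range_succ, Finset.sum_mul]
  congr 1
  · refine Finset.sum_congr rfl fun i hi => ?_
    have hik : i < k := Finset.mem_range.1 hi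
    rw [mul_assoc, ← pow_succ]
    congr 2
    omega
  · simp

lemma ival_inj (k : ℕ) : ∀ (d d' : ℕ → ℕ), (∀ i < k, d i < m) → (∀ i < k, d' i < m) →
    ival m k d = ival m k d' → ∀ i < k, d i = d' i := by
  induction k with
  | zero => intro d d' _ _ _ i hi; omega
  | succ k ih =>
    intro d d' hd hd' heq i hi
    rw [ival_succ hm, ival_succ hm] at heq
    have hdk : d k = d' k := by
      have h1 : (ival m k d * m + d k) % m = d k % m := Nat.mul_add_mod' _ _ _
      have h2 : (ival m k d' * m + d' k) % m = d' k % m := Nat.mul_add_mod' _ _ _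
      rw [heq, h2] at h1
      rw [Nat.mod_eq_of_lt (hd' k (by omega)), Nat.mod_eq_of_lt (hd k (by omega))] at h1
      omega
    rcases Nat.lt_succ_iff_lt_or_eq.1 hi with h | h
    · have hiv : ival m k d = ival m k d' := by
        have : ival m k d * m = ival m k d' * m := by omega
        exact Nat.eq_of_mul_eq_mul_right (by omega) this
      exact ih d d' (fun j hj => hd j (by omega)) (fun j hj => hd' j (by omega)) hiv i h
    · subst h; exact hdk

end Pre

section Group
open MeasureTheory TopologicalSpace

local instance (n : ℕ) : TopologicalSpace (ZMod n) := ⊥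
local instance (n : ℕ) : DiscreteTopology (ZMod n) := ⟨rfl⟩
local instance (n : ℕ) : IsTopologicalAddGroup (ZMod n) :=
  { continuous_add := continuous_of_discreteTopology
    continuous_neg := continuous_of_discreteTopology }

variable {m : ℕ} (N : ℕ → ℕ) [hNZ : ∀ k, NeZero (N k)]

lemma exists_nu (hm : 2 ≤ m) (e : ∀ k, ZMod (N k) → ℕ) (he : ∀ k z, e k z < m)
    (heinj : ∀ k, Function.Injective (e k)) :
    ∃ ν : Measure ℝ,
      ν {x : ℝ | ∃ g : ∀ k, ZMod (N k), x = expandIn m (fun k => e k (g k))} = 1 ∧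
      ∀ (k : ℕ) (A : Set ℝ), EMetric.diam A < ENNReal.ofReal (((m:ℝ)⁻¹) ^ k) →
        ν A ≤ 5 * (∏ i ∈ Finset.range k, (N i : ℝ≥0∞))⁻¹ := by
  classical
  have hm0 : (0:ℝ) < m := by exact_mod_cast (by omega : 0 < m)
  letI : MeasurableSpace (∀ k, ZMod (N k)) := borel _
  haveI : BorelSpace (∀ k, ZMod (N k)) := ⟨rfl⟩
  set φ : (∀ k, ZMod (N k)) → ℝ := fun g => expandIn m (fun k => e k (g k)) with hφ
  have hφc : Continuous φ := by
    have h1 : (m:ℝ)⁻¹ < 1 := by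
      rw [inv_lt_one_iff₀]; right; exact_mod_cast (by omega : 1 < m)
    have hu : Summable (fun i : ℕ => (m:ℝ) * ((m:ℝ)⁻¹) ^ (i+1)) :=
      Summable.mul_left _ ((summable_geometric_of_lt_one (by positivity) h1).comp_injective
        (add_left_injective 1))
    apply continuous_tsum (f := fun i (g : ∀ k, ZMod (N k)) => (e i (g i) : ℝ)/(m:ℝ)^(i+1))
      (fun i => ?_) hu (fun i g => ?_)
    · exact (continuous_of_discreteTopology (α := ZMod (N i))
        (f := fun z => (e i z : ℝ)/(m:ℝ)^(i+1))).comp (continuous_apply i)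
    · show ‖(e i (g i) : ℝ)/(m:ℝ)^(i+1)‖ ≤ (m:ℝ) * ((m:ℝ)⁻¹) ^ (i+1)
      rw [Real.norm_eq_abs, abs_of_nonneg (by positivity), div_eq_mul_inv, ← inv_pow]
      exact mul_le_mul_of_nonneg_right (by exact_mod_cast (he i (g i)).le) (by positivity)
  set K₀ : PositiveCompacts (∀ k, ZMod (N k)) :=
    ⟨⟨Set.univ, isCompact_univ⟩, by simpa [interior_univ] using Set.univ_nonempty⟩ with hK₀
  set μ : Measure (∀ k, ZMod (N k)) := Measure.addHaarMeasure K₀ with hμ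
  have hμuniv : μ Set.univ = 1 := by
    have := Measure.addHaarMeasure_self (K₀ := K₀)
    simpa [hK₀] using this
  -- cylinders
  set C : ℕ → (∀ i, ZMod (N i)) → Set (∀ i, ZMod (N i)) :=
    fun k w => {g | ∀ i < k, g i = w i} with hC
  have hCopen : ∀ k w, IsOpen (C k w) := by
    intro k w
    have : C k w = Set.pi ↑(Finset.range k) (fun i => ({w i} : Set (ZMod (N i)))) := by
      ext g; simp [hC, Set.mem_pi]
    rw [this]
    exact isOpen_set_pi (Finset.range k).finite_toSet (fun i _ => isOpen_discrete _)
  have hCmeas : ∀ k w, MeasurableSet (C k w) := fun k w => (hCopen k w).measurableSet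
  have hCinv : ∀ k w, μ (C k w) = μ (C k 0) := by
    intro k w
    have : C k w = (fun g => (-w) + g) ⁻¹' (C k 0) := by
      ext g
      simp only [hC, Set.mem_preimage, Set.mem_setOf_eq, Pi.add_apply, Pi.neg_apply, Pi.zero_apply]
      constructor
      · intro h i hi; rw [h i hi, neg_add_cancel]
      · intro h i hi; have h2 := h i hi; rw [neg_add_eq_zero] at h2; exact h2.symm
    rw [this, measure_preimage_add]
  -- partition and measure of cylinders
  have hCvol : ∀ k w, μ (C k w) = (∏ i ∈ Finset.range k, (N i : ℝ≥0∞))⁻¹ := by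
    intro k w
    rw [hCinv k w]
    set P : ℝ≥0∞ := ∏ i ∈ Finset.range k, (N i : ℝ≥0∞) with hP
    have hPne0 : P ≠ 0 := by
      rw [hP]
      refine Finset.prod_ne_zero_iff.2 fun i _ => ?_
      exact Nat.cast_ne_zero.2 (hNZ i).out
    have hPnetop : P ≠ ⊤ := by
      rw [hP]
      exact (ENNReal.prod_lt_top (fun i _ => ENNReal.natCast_lt_top (N i))).ne
    -- extension of finite words
    set ext : (∀ i : Fin k, ZMod (N i)) → (∀ i, ZMod (N i)) :=
      fun w i => if h : i < k then w ⟨i, h⟩ else 0 with hext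
    have hcover : (⋃ w : ∀ i : Fin k, ZMod (N i), C k (ext w)) = Set.univ := by
      apply Set.eq_univ_of_forall
      intro g
      refine Set.mem_iUnion.2 ⟨fun i => g i, fun i hi => ?_⟩
      simp [hext, hi]
    have hdisj : Pairwise (Function.onFun Disjoint (fun w : ∀ i : Fin k, ZMod (N i) => C k (ext w))) := by
      intro w w' hne
      rw [Function.onFun, Set.disjoint_left]
      rintro g hg hg'
      apply hne
      funext i
      have h1 := hg i.1 i.2
      have h2 := hg' i.1 i.2
      simp only [hext, dif_pos i.2] at h1 h2
      simp only [Fin.eta] at h1 h2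
      exact h1.symm.trans h2
    have hsum : ∑' (w : ∀ i : Fin k, ZMod (N i)), μ (C k (ext w)) = 1 := by
      rw [← measure_iUnion hdisj (fun w => hCmeas k (ext w)), hcover, hμuniv]
    have hconst : ∀ w : ∀ i : Fin k, ZMod (N i), μ (C k (ext w)) = μ (C k 0) :=
      fun w => hCinv k (ext w)
    have hcard : (Fintype.card (∀ i : Fin k, ZMod (N i)) : ℝ≥0∞) = P := by
      rw [Fintype.card_pi]
      rw [hP, ← Fin.prod_univ_eq_prod_range (fun i => (N i : ℝ≥0∞)) k]
      push_cast
      exact Finset.prod_congr rfl fun i _ => by rw [ZMod.card]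
    have hsum2 : (∑' (w : ∀ i : Fin k, ZMod (N i)), μ (C k (ext w)))
        = (Fintype.card (∀ i : Fin k, ZMod (N i)) : ℝ≥0∞) * μ (C k 0) := by
      rw [tsum_fintype, Finset.sum_congr rfl (fun w _ => hconst w), Finset.sum_const,
        nsmul_eq_mul, Finset.card_univ]
    rw [hsum2, hcard] at hsum
    calc μ (C k 0) = P⁻¹ * (P * μ (C k 0)) := by
          rw [← mul_assoc, ENNReal.inv_mul_cancel hPne0 hPnetop, one_mul]
      _ = P⁻¹ := by rw [hsum, mul_one]
  -- the pushforward measure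
  refine ⟨Measure.map φ μ, ?_, ?_⟩
  · have hrange : {x : ℝ | ∃ g : ∀ k, ZMod (N k), x = φ g} = Set.range φ := by
      ext x; simp [Set.range, eq_comm]
    have hcr : IsCompact (Set.range φ) := isCompact_range hφc
    rw [show {x : ℝ | ∃ g : ∀ k, ZMod (N k), x = expandIn m (fun k => e k (g k))}
        = Set.range φ from hrange]
    rw [Measure.map_apply hφc.measurable hcr.isClosed.measurableSet, Set.preimage_range, hμuniv]
  · intro k A hA
    set B := closure A with hB
    have hdB : EMetric.diam B < ENNReal.ofReal (((m:ℝ)⁻¹) ^ k) := by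
      rw [hB]; exact (le_of_eq (Metric.ediam_closure A)).trans_lt hA
    have step1 : Measure.map φ μ A ≤ μ (φ ⁻¹' B) := by
      calc Measure.map φ μ A ≤ Measure.map φ μ B := measure_mono subset_closure
        _ = μ (φ ⁻¹' B) := Measure.map_apply hφc.measurable isClosed_closure.measurableSet
    rcases Set.eq_empty_or_nonempty (φ ⁻¹' B) with hemp | ⟨g₀, hg₀⟩
    · refine le_trans step1 (le_trans (le_of_eq ?_) (zero_le))
      rw [hemp]; exact measure_empty
    -- nonempty case: covering by at most 5 cylinders
    set ext : (∀ i : Fin k, ZMod (N i)) → (∀ i, ZMod (N i)) :=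
      fun w i => if h : i < k then w ⟨i, h⟩ else 0 with hext
    set pre : (∀ i, ZMod (N i)) → (∀ i : Fin k, ZMod (N i)) := fun g i => g i.1 with hpre
    set W : Finset (∀ i : Fin k, ZMod (N i)) :=
      (Set.toFinite (pre '' (φ ⁻¹' B))).toFinset with hW
    have hcov : φ ⁻¹' B ⊆ ⋃ w ∈ W, C k (ext w) := by
      intro g hg
      refine Set.mem_biUnion ((Set.Finite.mem_toFinset _).2 ⟨g, hg, rfl⟩) ?_
      intro i hi
      simp [hext, hpre, hi]
    -- integer values of prefixes
    set Iv : (∀ i : Fin k, ZMod (N i)) → ℤ := fun w => (ival m k (fun i => e i (ext w i)) : ℤ)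
      with hIv
    have hIvinj : Function.Injective Iv := by
      intro w w' h
      have h2 : ival m k (fun i => e i (ext w i)) = ival m k (fun i => e i (ext w' i)) := by
        simp only [hIv] at h
        exact_mod_cast h
      have h3 := ival_inj hm k _ _ (fun i _ => he i _) (fun i _ => he i _) h2
      funext i
      have h4 := h3 i.1 i.2
      have h5 : ext w i.1 = ext w' i.1 := heinj i.1 h4
      simpa [hext, dif_pos i.2, Fin.eta] using h5
    -- distance control on prefix values
    have hIcc2 : ∀ g : ∀ i, ZMod (N i), φ g ∈ Icc (aval m k (fun i => e i (g i)))
        (aval m k (fun i => e i (g i)) + ((m:ℝ)⁻¹)^k) :=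
      fun g => expand_mem_Icc hm (fun i => he i _) k
    have key : ∀ g ∈ φ ⁻¹' B, |aval m k (fun i => e i (g i)) - aval m k (fun i => e i (g₀ i))|
        < 3 * ((m:ℝ)⁻¹)^k := by
      intro g hg
      have h1 := hIcc2 g
      have h2 := hIcc2 g₀
      have hd : dist (φ g) (φ g₀) < ((m:ℝ)⁻¹)^k := by
        have hedist : edist (φ g) (φ g₀) < ENNReal.ofReal (((m:ℝ)⁻¹)^k) :=
          lt_of_le_of_lt (EMetric.edist_le_diam_of_mem hg hg₀) hdB
        rw [edist_dist] at hedist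
        exact (ENNReal.ofReal_lt_ofReal_iff (by positivity)).1 hedist
      rw [Real.dist_eq] at hd
      rw [abs_lt] at hd ⊢
      rcases h1 with ⟨h1a, h1b⟩; rcases h2 with ⟨h2a, h2b⟩
      constructor <;> nlinarith [pow_pos (inv_pos.2 hm0) k]
    have hcong : ∀ h : ∀ i, ZMod (N i),
        aval m k (fun i => e i (ext (pre h) i)) = aval m k (fun i => e i (h i)) :=
      fun h => aval_congr (fun i hi => by simp [hext, hpre, dif_pos hi])
    have hpowone : ((m:ℝ)⁻¹)^k * (m:ℝ)^k = 1 := by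
      rw [← mul_pow, inv_mul_cancel₀ (ne_of_gt hm0), one_pow]
    have e1 : ∀ h : ∀ i, ZMod (N i),
        ((Iv (pre h) : ℝ)) = aval m k (fun i => e i (h i)) * (m:ℝ)^k := by
      intro h
      have ha := aval_eq_ival hm (m := m) k (fun i => e i (ext (pre h) i))
      rw [hcong h] at ha
      have hb : (ival m k (fun i => e i (ext (pre h) i)) : ℝ)
          = aval m k (fun i => e i (h i)) * (m:ℝ)^k := by
        rw [ha, div_mul_cancel₀]
        positivity
      simp only [hIv]
      push_cast
      exact hb
    have havaldist : ∀ w ∈ W, |(Iv w : ℝ) - (Iv (pre g₀) : ℝ)| < 3 := by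
      intro w hw
      rcases (Set.Finite.mem_toFinset _).1 hw with ⟨g, hg, rfl⟩
      have hk := key g hg
      rw [e1 g, e1 g₀, ← sub_mul, abs_mul, abs_of_pos (by positivity : (0:ℝ) < (m:ℝ)^k)]
      nlinarith [abs_nonneg (aval m k (fun i => e i (g i)) - aval m k (fun i => e i (g₀ i))),
        pow_pos hm0 k]
    have hwindow : ∀ w ∈ W, Iv w ∈ Finset.Icc (Iv (pre g₀) - 2) (Iv (pre g₀) + 2) := by
      intro w hw
      have h := havaldist w hw
      rw [abs_lt] at h
      have h1 : (Iv w : ℝ) - (Iv (pre g₀) : ℝ) < 3 := h.2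
      have h2 : -(3:ℝ) < (Iv w : ℝ) - (Iv (pre g₀) : ℝ) := h.1
      have h3 : Iv w - Iv (pre g₀) < 3 := by exact_mod_cast (by push_cast; linarith : ((Iv w - Iv (pre g₀) : ℤ) : ℝ) < 3)
      have h4 : -3 < Iv w - Iv (pre g₀) := by exact_mod_cast (by push_cast; linarith : (-3 : ℝ) < ((Iv w - Iv (pre g₀) : ℤ) : ℝ))
      rw [Finset.mem_Icc]
      omega
    have hcardW : W.card ≤ 5 := by
      have := Finset.card_le_card_of_injOn Iv hwindow hIvinj.injOn
      have h5 : (Finset.Icc (Iv (pre g₀) - 2) (Iv (pre g₀) + 2)).card = 5 := by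
        rw [Int.card_Icc]
        omega
      omega
    calc Measure.map φ μ A ≤ μ (φ ⁻¹' B) := step1
      _ ≤ ∑ w ∈ W, μ (C k (ext w)) := (measure_mono hcov).trans (measure_biUnion_finset_le W _)
      _ = ∑ w ∈ W, (∏ i ∈ Finset.range k, (N i : ℝ≥0∞))⁻¹ :=
          Finset.sum_congr rfl fun w _ => hCvol k (ext w)
      _ = W.card * (∏ i ∈ Finset.range k, (N i : ℝ≥0∞))⁻¹ := by
          rw [Finset.sum_const, nsmul_eq_mul]
      _ ≤ 5 * (∏ i ∈ Finset.range k, (N i : ℝ≥0∞))⁻¹ := by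
          gcongr
          exact_mod_cast hcardW
end Group
end Stmt12
open Stmt12

set_option maxHeartbeats 2000000 in
/-- The Hausdorff dimension of `π_m(F̃_ω)` is
`liminf_k (∑_{i<k} log|Γ_{ω_i}|)/(k log m)`; in particular it is at most
`max_i log|Γ_i|/log m`. -/
theorem stmt12
    (m n : ℕ) (hm : 2 ≤ m) (hn : 2 ≤ n)
    (Γ : ℕ → Set ℕ) (hΓ : ∀ i < n, (Γ i).Nonempty ∧ Γ i ⊆ Set.Iio m)
    (ω : ℕ → ℕ) (hω : ∀ k, ω k < n) :
    dimH (prodSet m Γ ω) =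
      ENNReal.ofReal (liminf (fun k : ℕ =>
        (∑ i ∈ Finset.range k, Real.log ((Γ (ω i)).ncard)) / (k * Real.log m)) atTop) ∧
    dimH (prodSet m Γ ω) ≤
      ENNReal.ofReal (sSup { x : ℝ | ∃ i < n, x = Real.log ((Γ i).ncard) / Real.log m }) := by
  classical
  have hm0 : (0:ℝ) < m := by exact_mod_cast (by omega : 0 < m)
  have hm1R : (1:ℝ) < m := by exact_mod_cast (by omega : 1 < m)
  have hminv1 : (m:ℝ)⁻¹ < 1 := by rw [inv_lt_one_iff₀]; right; exact hm1R
  have hlogm : 0 < Real.log m := Real.log_pos hm1R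
  set N : ℕ → ℕ := fun k => (Γ (ω k)).ncard with hNdef
  have hfin : ∀ k, (Γ (ω k)).Finite := fun k => (Set.finite_Iio m).subset (hΓ _ (hω k)).2
  have hNpos : ∀ k, 0 < N k := fun k => (Set.ncard_pos (hfin k)).2 (hΓ _ (hω k)).1
  haveI : ∀ k, NeZero (N k) := fun k => ⟨(hNpos k).ne'⟩
  have hNle : ∀ k, N k ≤ m := by
    intro k
    have h1 : (Γ (ω k)).ncard ≤ (Set.Iio m).ncard :=
      Set.ncard_le_ncard (hΓ _ (hω k)).2 (Set.finite_Iio m)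
    have h2 : (Set.Iio m).ncard = m := by
      rw [show (Set.Iio m) = ↑(Finset.range m) by ext x; simp, Set.ncard_coe_finset,
        Finset.card_range]
    show (Γ (ω k)).ncard ≤ m
    omega
  -- the encoding e k : ZMod (N k) ≃ Γ (ω k)
  have hcardF : ∀ k, ((hfin k).toFinset).card = N k := fun k =>
    (Set.ncard_eq_toFinset_card _ (hfin k)).symm
  set e : ∀ k, ZMod (N k) → ℕ := fun k z =>
    (((hfin k).toFinset.equivFin.symm ⟨ZMod.val z, by rw [hcardF k]; exact ZMod.val_lt z⟩ : _) : ℕ)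
    with hedef
  have he_mem : ∀ k z, e k z ∈ Γ (ω k) := by
    intro k z
    have := ((hfin k).toFinset.equivFin.symm ⟨ZMod.val z, by rw [hcardF k]; exact ZMod.val_lt z⟩).2
    rw [Set.Finite.mem_toFinset] at this
    exact this
  have he : ∀ k z, e k z < m := fun k z => (hΓ _ (hω k)).2 (he_mem k z)
  have heinj : ∀ k, Function.Injective (e k) := by
    intro k z z' h
    apply ZMod.val_injective
    have h3 := (hfin k).toFinset.equivFin.symm.injective (Subtype.val_injective h)
    simpa using congrArg Fin.val h3
  have hesurj : ∀ k a, a ∈ Γ (ω k) → ∃ z, e k z = a := by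
    intro k a ha
    set j := (hfin k).toFinset.equivFin ⟨a, (Set.Finite.mem_toFinset _).2 ha⟩ with hj
    refine ⟨(j.1 : ZMod (N k)), ?_⟩
    have hval : ZMod.val ((j.1 : ℕ) : ZMod (N k)) = j.1 := by
      apply ZMod.val_cast_of_lt
      exact Nat.lt_of_lt_of_le j.2 (le_of_eq (hcardF k))
    have h4 : (⟨ZMod.val ((j.1 : ℕ) : ZMod (N k)), lt_of_lt_of_eq (ZMod.val_lt _) (hcardF k).symm⟩ :
        Fin ((hfin k).toFinset.card)) = j := Fin.ext hval
    show (((hfin k).toFinset.equivFin.symm ⟨ZMod.val ((j.1 : ℕ) : ZMod (N k)),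
      lt_of_lt_of_eq (ZMod.val_lt _) (hcardF k).symm⟩ : _) : ℕ) = a
    rw [h4, hj, Equiv.symm_apply_apply]
  -- set equality
  have hEset : prodSet m Γ ω
      = {x : ℝ | ∃ g : ∀ k, ZMod (N k), x = expandIn m (fun k => e k (g k))} := by
    ext x
    constructor
    · rintro ⟨d, hd, rfl⟩
      refine ⟨fun k => Classical.choose (hesurj k (d k) (hd k)), ?_⟩
      congr 1
      funext k
      exact (Classical.choose_spec (hesurj k (d k) (hd k))).symm
    · rintro ⟨g, rfl⟩
      exact ⟨fun k => e k (g k), fun k => he_mem k (g k), rfl⟩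
  -- liminf machinery
  set L : ℕ → ℝ := fun k => ∑ i ∈ Finset.range k, Real.log ((Γ (ω i)).ncard) with hLdef
  set ratio : ℕ → ℝ := fun k => L k / (k * Real.log m) with hratiodef
  set s := liminf ratio atTop with hsdef
  have hlog_nonneg : ∀ i : ℕ, 0 ≤ Real.log ((Γ (ω i)).ncard) := fun i =>
    Real.log_nonneg (by exact_mod_cast hNpos i)
  have hlog_le : ∀ i : ℕ, Real.log ((Γ (ω i)).ncard) ≤ Real.log m := fun i =>
    Real.log_le_log (by exact_mod_cast hNpos i) (by exact_mod_cast hNle i)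
  have hL_nonneg : ∀ k, 0 ≤ L k := fun k => Finset.sum_nonneg fun i _ => hlog_nonneg i
  have hL_le : ∀ k, L k ≤ k * Real.log m := by
    intro k
    calc L k ≤ ∑ i ∈ Finset.range k, Real.log m :=
          Finset.sum_le_sum fun i _ => hlog_le i
      _ = k * Real.log m := by rw [Finset.sum_const, Finset.card_range, nsmul_eq_mul]
  have hratio0 : ∀ k, 0 ≤ ratio k := fun k =>
    div_nonneg (hL_nonneg k) (by positivity)
  have hratio1 : ∀ k, ratio k ≤ 1 := by
    intro k
    rcases Nat.eq_zero_or_pos k with rfl | hk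
    · simp [hratiodef]
    · have hd : (0:ℝ) < k * Real.log m := by
        have : (0:ℝ) < k := by exact_mod_cast hk
        positivity
      exact (div_le_one hd).2 (hL_le k)
  have hbdd_le : IsBoundedUnder (· ≤ ·) atTop ratio := isBoundedUnder_of ⟨1, hratio1⟩
  have hbdd_ge : IsBoundedUnder (· ≥ ·) atTop ratio := isBoundedUnder_of ⟨0, hratio0⟩
  have hs0 : 0 ≤ s := le_liminf_of_le hbdd_le.isCoboundedUnder_ge (Eventually.of_forall hratio0)
  have hs1 : s ≤ 1 := liminf_le_of_frequently_le (Frequently.of_forall hratio1) hbdd_ge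
  -- ∏ N = exp L
  have hprodL : ∀ k, (∏ i ∈ Finset.range k, (N i : ℝ)) = Real.exp (L k) := by
    intro k
    rw [hLdef, Real.exp_sum]
    exact Finset.prod_congr rfl fun i _ => (Real.exp_log (by exact_mod_cast hNpos i)).symm
  -- UPPER BOUND
  have hub : ∀ t : ℝ, s < t → dimH (prodSet m Γ ω) ≤ ENNReal.ofReal t := by
    intro t ht
    set t' : ℝ := (s + t)/2 with ht'def
    have hst'1 : s < t' := by rw [ht'def]; linarith
    have hst'2 : t' < t := by rw [ht'def]; linarith
    have ht'0 : 0 ≤ t' := le_trans hs0 hst'1.le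
    have hfreq : ∃ᶠ k in atTop, ratio k < t' :=
      frequently_lt_of_liminf_lt hbdd_le.isCoboundedUnder_ge hst'1
    obtain ⟨ψ, hψmono, hψ⟩ := extraction_of_frequently_atTop
      (hfreq.and_eventually (eventually_ge_atTop 1))
    set c : ℝ := (t - t') * Real.log m with hcdef
    have hc0 : 0 < c := by
      rw [hcdef]; apply mul_pos (by linarith) hlogm
    set dig : ∀ k, (∀ i : Fin k, ZMod (N i)) → (ℕ → ℕ) :=
      fun k w i => if h : i < k then e i (w ⟨i, h⟩) else 0 with hdig
    set T : ∀ j : ℕ, (∀ i : Fin (ψ j), ZMod (N i)) → Set ℝ :=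
      fun j w => Icc (aval m (ψ j) (dig (ψ j) w))
        (aval m (ψ j) (dig (ψ j) w) + ((m:ℝ)⁻¹)^(ψ j)) with hT
    have hr0 : Tendsto (fun j => ENNReal.ofReal (((m:ℝ)⁻¹)^(ψ j))) atTop (𝓝 0) := by
      rw [← ENNReal.ofReal_zero]
      exact (ENNReal.continuous_ofReal.tendsto 0).comp
        ((tendsto_pow_atTop_nhds_zero_of_lt_one (by positivity) hminv1).comp
          hψmono.tendsto_atTop)
    have hdiamT : ∀ j w, EMetric.diam (T j w) = ENNReal.ofReal (((m:ℝ)⁻¹)^(ψ j)) := by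
      intro j w
      simp only [hT]
      exact (Real.ediam_Icc _ _).trans (by rw [add_sub_cancel_left])
    have hcov : ∀ j, prodSet m Γ ω ⊆ ⋃ w, T j w := by
      intro j x hx
      rw [hEset] at hx
      obtain ⟨g, rfl⟩ := hx
      refine Set.mem_iUnion.2 ⟨fun i => g i, ?_⟩
      have h1 := expand_mem_Icc hm (d := fun k => e k (g k)) (fun i => he i _) (ψ j)
      have h2 : aval m (ψ j) (dig (ψ j) (fun i => g i)) = aval m (ψ j) (fun k => e k (g k)) :=
        aval_congr (fun i hi => by simp [hdig, dif_pos hi])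
      simp only [hT]
      rw [h2]
      exact h1
    have hkey := Measure.hausdorffMeasure_le_liminf_sum t (prodSet m Γ ω)
      (fun j => ENNReal.ofReal (((m:ℝ)⁻¹)^(ψ j))) hr0 T
      (Eventually.of_forall fun j w => le_of_eq (hdiamT j w))
      (Eventually.of_forall hcov)
    have hcardP : ∀ k : ℕ, (Fintype.card (∀ i : Fin k, ZMod (N i)) : ℝ)
        = ∏ i ∈ Finset.range k, (N i : ℝ) := by
      intro k
      rw [Fintype.card_pi]
      push_cast
      rw [← Fin.prod_univ_eq_prod_range (fun i => (N i : ℝ)) k]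
      exact Finset.prod_congr rfl fun i _ => by rw [ZMod.card]
    have hsumle : ∀ j, (∑ w : ∀ i : Fin (ψ j), ZMod (N i), EMetric.diam (T j w) ^ t)
        ≤ ENNReal.ofReal ((Real.exp (-c)) ^ (ψ j)) := by
      intro j
      have hk1 : 1 ≤ ψ j := (hψ j).2
      have hkpos : (0:ℝ) < (ψ j : ℝ) := by exact_mod_cast hk1
      have hLlt : L (ψ j) < t' * ((ψ j) * Real.log m) := by
        have h3 := (hψ j).1
        rw [hratiodef] at h3
        exact (div_lt_iff₀ (by positivity)).1 h3
      have hrpow : (((m:ℝ)⁻¹) ^ (ψ j)) ^ t = Real.exp (-((ψ j : ℝ) * Real.log m) * t) := by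
        rw [Real.rpow_def_of_pos (by positivity), Real.log_pow, Real.log_inv]
        congr 1
        ring
      calc (∑ w : ∀ i : Fin (ψ j), ZMod (N i), EMetric.diam (T j w) ^ t)
          = (Fintype.card (∀ i : Fin (ψ j), ZMod (N i)) : ℝ≥0∞)
            * ENNReal.ofReal (((m:ℝ)⁻¹)^(ψ j)) ^ t := by
            rw [Finset.sum_congr rfl (fun w _ => by rw [hdiamT j w]), Finset.sum_const,
              nsmul_eq_mul, Finset.card_univ]
        _ = ENNReal.ofReal ((∏ i ∈ Finset.range (ψ j), (N i:ℝ)) * ((((m:ℝ)⁻¹)^(ψ j)) ^ t)) := by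
            rw [ENNReal.ofReal_rpow_of_pos (by positivity),
              ENNReal.ofReal_mul (by positivity)]
            congr 1
            rw [← hcardP (ψ j)]
            exact (ENNReal.ofReal_natCast _).symm
        _ ≤ ENNReal.ofReal ((Real.exp (-c)) ^ (ψ j)) := by
            apply ENNReal.ofReal_le_ofReal
            rw [hprodL, hrpow, ← Real.exp_add, ← Real.exp_nat_mul]
            apply Real.exp_le_exp.2
            rw [hcdef]
            nlinarith [hlogm, hkpos, hLlt]
    have htendS : Tendsto (fun j => ENNReal.ofReal ((Real.exp (-c)) ^ (ψ j))) atTop (𝓝 0) := by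
      rw [← ENNReal.ofReal_zero]
      refine (ENNReal.continuous_ofReal.tendsto 0).comp
        ((tendsto_pow_atTop_nhds_zero_of_lt_one (Real.exp_pos _).le ?_).comp
          hψmono.tendsto_atTop)
      rw [Real.exp_lt_one_iff]
      linarith
    have hmeas0 : μH[t] (prodSet m Γ ω) = 0 := by
      refine le_antisymm ?_ (zero_le)
      calc μH[t] (prodSet m Γ ω)
          ≤ liminf (fun j => ∑ w : ∀ i : Fin (ψ j), ZMod (N i), EMetric.diam (T j w) ^ t)
            atTop := hkey
        _ ≤ liminf (fun j => ENNReal.ofReal ((Real.exp (-c)) ^ (ψ j))) atTop :=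
            liminf_le_liminf (Eventually.of_forall hsumle)
        _ = 0 := htendS.liminf_eq
    have ht0 : 0 ≤ t := le_trans hs0 ht.le
    have hcoe : ((t.toNNReal : ℝ≥0) : ℝ) = t := Real.coe_toNNReal t ht0
    have hne : μH[((t.toNNReal : ℝ≥0) : ℝ)] (prodSet m Γ ω) ≠ ⊤ := by
      rw [hcoe, hmeas0]
      exact ENNReal.zero_ne_top
    have := dimH_le_of_hausdorffMeasure_ne_top hne
    rwa [show ((t.toNNReal : ℝ≥0) : ℝ≥0∞) = ENNReal.ofReal t from rfl] at this
  have hub2 : dimH (prodSet m Γ ω) ≤ ENNReal.ofReal s := by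
    refine ENNReal.le_of_forall_pos_le_add fun ε hε _ => ?_
    have hεR : (0:ℝ) < (ε:ℝ) := hε
    calc dimH (prodSet m Γ ω) ≤ ENNReal.ofReal (s + ε) := hub _ (by linarith)
      _ = ENNReal.ofReal s + ENNReal.ofReal ε := ENNReal.ofReal_add hs0 hεR.le
      _ = ENNReal.ofReal s + ε := by rw [ENNReal.ofReal_coe_nnreal]
  -- LOWER BOUND
  have hlb : ENNReal.ofReal s ≤ dimH (prodSet m Γ ω) := by
    rcases le_or_gt s 0 with hs | hs
    · rw [ENNReal.ofReal_eq_zero.2 hs]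
      exact zero_le
    apply ENNReal.le_of_forall_nnreal_lt
    intro r hr
    have hrs : (r:ℝ) < s := by
      rwa [← ENNReal.ofReal_coe_nnreal, ENNReal.ofReal_lt_ofReal_iff hs] at hr
    set t' : ℝ := ((r:ℝ) + s)/2 with ht'def
    have hrt' : (r:ℝ) < t' := by rw [ht'def]; linarith
    have ht's : t' < s := by rw [ht'def]; linarith
    have ht'0 : 0 < t' := by
      have : (0:ℝ) ≤ (r:ℝ) := r.coe_nonneg
      rw [ht'def]; linarith
    have ht'1 : t' ≤ 1 := le_trans ht's.le hs1
    have hev : ∀ᶠ k in atTop, t' < ratio k := eventually_lt_of_lt_liminf ht's hbdd_ge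
    obtain ⟨K₀, hK₀⟩ := eventually_atTop.1 (hev.and (eventually_ge_atTop 1))
    set q : ℝ := Real.exp (-(t' * Real.log m)) with hq
    have hq0 : 0 < q := Real.exp_pos _
    have hq1 : q < 1 := by
      rw [hq, Real.exp_lt_one_iff]
      nlinarith
    have hProdGe : ∀ k, K₀ ≤ k →
        Real.exp (t' * (k * Real.log m)) ≤ ∏ i ∈ Finset.range k, (N i:ℝ) := by
      intro k hk
      have h := hK₀ k hk
      have hkpos : (0:ℝ) < (k:ℝ) := by exact_mod_cast h.2
      rw [hprodL]
      apply Real.exp_le_exp.2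
      have h2 := (lt_div_iff₀ (by positivity)).1 h.1
      linarith
    obtain ⟨ν, hν1, hνest⟩ := exists_nu N hm e he heinj
    have hPinv : ∀ k, K₀ ≤ k → (5:ℝ≥0∞) * (∏ i ∈ Finset.range k, (N i : ℝ≥0∞))⁻¹
        ≤ ENNReal.ofReal (5 * q ^ k) := by
      intro k hk
      have hqk : Real.exp (-(t' * (k * Real.log m))) = q ^ k := by
        rw [hq, ← Real.exp_nat_mul]
        congr 1
        ring
      have h2 : (∏ i ∈ Finset.range k, (N i : ℝ≥0∞))
          = ENNReal.ofReal (∏ i ∈ Finset.range k, (N i:ℝ)) := by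
        rw [← Nat.cast_prod, ← ENNReal.ofReal_natCast, Nat.cast_prod]
      have h1 : ENNReal.ofReal (Real.exp (t' * (k * Real.log m)))
          ≤ ∏ i ∈ Finset.range k, (N i : ℝ≥0∞) := by
        rw [h2]
        exact ENNReal.ofReal_le_ofReal (hProdGe k hk)
      calc (5:ℝ≥0∞) * (∏ i ∈ Finset.range k, (N i : ℝ≥0∞))⁻¹
          ≤ (5:ℝ≥0∞) * (ENNReal.ofReal (Real.exp (t' * (k * Real.log m))))⁻¹ := by
            gcongr
        _ = ENNReal.ofReal (5 * q ^ k) := by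
            rw [← ENNReal.ofReal_inv_of_pos (Real.exp_pos _), ← Real.exp_neg, hqk,
              ENNReal.ofReal_mul (by norm_num)]
            congr 1
            exact (ENNReal.ofReal_ofNat 5).symm
    set C : ℝ≥0∞ := ENNReal.ofReal (5 * m) with hCdef
    have hC0 : C ≠ 0 := by
      rw [hCdef]
      exact (ENNReal.ofReal_pos.2 (by positivity)).ne'
    have hCtop : C ≠ ⊤ := ENNReal.ofReal_ne_top
    set ε : ℝ≥0∞ := ENNReal.ofReal (((m:ℝ)⁻¹)^(K₀+1)) with hεdef
    have hεpos : 0 < ε := ENNReal.ofReal_pos.2 (by positivity)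
    have hest : ∀ A : Set ℝ, EMetric.diam A ≤ ε →
        (C⁻¹ • ν) A ≤ EMetric.diam A ^ (r:ℝ) := by
      intro A hA
      rcases eq_or_ne (EMetric.diam A) 0 with hd0 | hdne
      · have hν0 : ν A = 0 := by
          have hb : ∀ k, K₀ ≤ k → ν A ≤ ENNReal.ofReal (5 * q ^ k) := by
            intro k hk
            refine le_trans (hνest k A ?_) (hPinv k hk)
            rw [hd0]
            exact ENNReal.ofReal_pos.2 (by positivity)
          have htend0 : Tendsto (fun k : ℕ => ENNReal.ofReal (5 * q ^ k)) atTop (𝓝 0) := by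
            rw [← ENNReal.ofReal_zero]
            apply (ENNReal.continuous_ofReal.tendsto 0).comp
            rw [show (0:ℝ) = 5 * 0 by ring]
            exact (tendsto_pow_atTop_nhds_zero_of_lt_one hq0.le hq1).const_mul 5
          have := ge_of_tendsto htend0 (eventually_atTop.2 ⟨K₀, hb⟩)
          exact le_antisymm this (zero_le)
        have : (C⁻¹ • ν) A = 0 := by
          rw [Measure.smul_apply, hν0, smul_eq_mul, mul_zero]
        rw [this]
        exact zero_le
      · have hdtop : EMetric.diam A ≠ ⊤ := (lt_of_le_of_lt hA ENNReal.ofReal_lt_top).ne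
        set δ : ℝ := (EMetric.diam A).toReal with hδdef
        have hδ0 : 0 < δ := ENNReal.toReal_pos hdne hdtop
        have hδle : δ ≤ ((m:ℝ)⁻¹)^(K₀+1) :=
          ENNReal.toReal_le_of_le_ofReal (by positivity) hA
        have hex : ∃ jj : ℕ, ((m:ℝ)⁻¹)^jj ≤ δ := by
          obtain ⟨j, hj⟩ := exists_pow_lt_of_lt_one hδ0 hminv1
          exact ⟨j, hj.le⟩
        set j₀ := Nat.find hex with hj₀def
        have hP₀ : ((m:ℝ)⁻¹)^j₀ ≤ δ := Nat.find_spec hex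
        have hj₀ge : K₀ + 1 ≤ j₀ := by
          by_contra hcon
          push_neg at hcon
          have hj₀K : j₀ ≤ K₀ := by omega
          have : ((m:ℝ)⁻¹)^(K₀+1) < ((m:ℝ)⁻¹)^j₀ :=
            pow_lt_pow_right_of_lt_one₀ (by positivity) hminv1 (by omega)
          linarith
        set k := j₀ - 1 with hkdef
        have hkK : K₀ ≤ k := by omega
        have hk1 : k + 1 = j₀ := by omega
        have hup : ((m:ℝ)⁻¹)^(k+1) ≤ δ := by rw [hk1]; exact hP₀
        have hlow : δ < ((m:ℝ)⁻¹)^k := by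
          have h := Nat.find_min hex (m := k) (by omega)
          push_neg at h
          exact h
        have hδ1 : δ ≤ 1 := le_trans hlow.le (pow_le_one₀ (by positivity) hminv1.le)
        have hdiamlt : EMetric.diam A < ENNReal.ofReal (((m:ℝ)⁻¹)^k) := by
          conv_lhs => rw [← ENNReal.ofReal_toReal hdtop]
          exact (ENNReal.ofReal_lt_ofReal_iff (by positivity)).2 hlow
        have hν2 : ν A ≤ ENNReal.ofReal (5 * q ^ k) :=
          le_trans (hνest k A hdiamlt) (hPinv k hkK)
        have hreal : 5 * q ^ k ≤ (5*(m:ℝ)) * δ ^ (r:ℝ) := by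
          have h1 : q ^ k = (((m:ℝ)⁻¹)^k) ^ t' := by
            rw [Real.rpow_def_of_pos (by positivity), Real.log_pow, Real.log_inv, hq,
              ← Real.exp_nat_mul]
            congr 1
            ring
          have h2 : ((m:ℝ)⁻¹)^k ≤ (m:ℝ) * δ := by
            have he1 : ((m:ℝ)⁻¹)^k = (m:ℝ) * ((m:ℝ)⁻¹)^(k+1) := by
              rw [pow_succ, ← mul_assoc, mul_comm (m:ℝ) (((m:ℝ)⁻¹)^k), mul_assoc,
                mul_inv_cancel₀ (ne_of_gt hm0), mul_one]
            rw [he1]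
            gcongr
          have h3 : (((m:ℝ)⁻¹)^k) ^ t' ≤ ((m:ℝ)*δ)^t' :=
            Real.rpow_le_rpow (by positivity) h2 ht'0.le
          have h4 : ((m:ℝ)*δ)^t' = (m:ℝ)^t' * δ^t' := Real.mul_rpow hm0.le hδ0.le
          have h5 : (m:ℝ)^t' ≤ (m:ℝ) := by
            calc (m:ℝ)^t' ≤ (m:ℝ)^(1:ℝ) :=
                Real.rpow_le_rpow_of_exponent_le hm1R.le ht'1
              _ = (m:ℝ) := Real.rpow_one _
          have h6 : δ^t' ≤ δ^(r:ℝ) :=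
            Real.rpow_le_rpow_of_exponent_ge hδ0 hδ1 hrt'.le
          have h7 : (0:ℝ) ≤ δ^t' := Real.rpow_nonneg hδ0.le _
          have h8 : (0:ℝ) ≤ (m:ℝ)^t' := Real.rpow_nonneg hm0.le _
          have h9 : (m:ℝ)^t' * δ^t' ≤ (m:ℝ) * δ^(r:ℝ) := by
            apply mul_le_mul h5 h6 h7 (by positivity)
          nlinarith [h1, h3, h4]
        have hCineq : ν A ≤ C * EMetric.diam A ^ (r:ℝ) := by
          have hdr : EMetric.diam A ^ (r:ℝ) = ENNReal.ofReal (δ ^ (r:ℝ)) := by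
            conv_lhs => rw [← ENNReal.ofReal_toReal hdtop]
            exact ENNReal.ofReal_rpow_of_pos hδ0
          calc ν A ≤ ENNReal.ofReal (5 * q ^ k) := hν2
            _ ≤ ENNReal.ofReal ((5*(m:ℝ)) * δ ^ (r:ℝ)) := ENNReal.ofReal_le_ofReal hreal
            _ = C * EMetric.diam A ^ (r:ℝ) := by
                rw [ENNReal.ofReal_mul (by positivity), hdr, hCdef]
        calc (C⁻¹ • ν) A = C⁻¹ * ν A := by rw [Measure.smul_apply, smul_eq_mul]
          _ ≤ C⁻¹ * (C * EMetric.diam A ^ (r:ℝ)) := by gcongr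
          _ = EMetric.diam A ^ (r:ℝ) := by
              rw [← mul_assoc, ENNReal.inv_mul_cancel hC0 hCtop, one_mul]
    have hmd := Measure.le_hausdorffMeasure (r:ℝ) (C⁻¹ • ν) ε hεpos hest
    have hμr : μH[((r : ℝ≥0) : ℝ)] (prodSet m Γ ω) ≠ 0 := by
      have h1 : (C⁻¹ • ν) (prodSet m Γ ω) ≤ μH[((r : ℝ≥0) : ℝ)] (prodSet m Γ ω) :=
        hmd _
      have h2 : (C⁻¹ • ν) (prodSet m Γ ω) = C⁻¹ := by
        rw [Measure.smul_apply, hEset, hν1, smul_eq_mul, mul_one]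
      intro h0
      rw [h0] at h1
      have h3 : C⁻¹ = 0 := le_antisymm (h2 ▸ h1) (zero_le)
      exact (ENNReal.inv_ne_zero.2 hCtop) h3
    exact le_dimH_of_hausdorffMeasure_ne_zero hμr
  -- final assembly
  have hfirst : dimH (prodSet m Γ ω) = ENNReal.ofReal s := le_antisymm hub2 hlb
  constructor
  · exact hfirst
  · -- second conjunct
    set M : ℝ := sSup { x : ℝ | ∃ i < n, x = Real.log ((Γ i).ncard) / Real.log m } with hMdef
    have hAset : { x : ℝ | ∃ i < n, x = Real.log ((Γ i).ncard) / Real.log m }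
        = (fun i : ℕ => Real.log ((Γ i).ncard) / Real.log m) '' (Set.Iio n) := by
      ext x
      simp [eq_comm]
    have hbddA : BddAbove { x : ℝ | ∃ i < n, x = Real.log ((Γ i).ncard) / Real.log m } := by
      rw [hAset]
      exact ((Set.finite_Iio n).image _).bddAbove
    have hmemM : ∀ i, i < n → Real.log ((Γ i).ncard) / Real.log m ≤ M :=
      fun i hi => le_csSup hbddA ⟨i, hi, rfl⟩
    have hratioM : ∀ k : ℕ, 1 ≤ k → ratio k ≤ M := by
      intro k hk
      have hkpos : (0:ℝ) < (k:ℝ) := by exact_mod_cast hk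
      have hLM : L k ≤ k * (M * Real.log m) := by
        calc L k ≤ ∑ _i ∈ Finset.range k, M * Real.log m := by
              apply Finset.sum_le_sum
              intro i _
              have := hmemM (ω i) (hω i)
              rw [div_le_iff₀ hlogm] at this
              exact this
          _ = k * (M * Real.log m) := by
              rw [Finset.sum_const, Finset.card_range, nsmul_eq_mul]
      show L k / (k * Real.log m) ≤ M
      rw [div_le_iff₀ (by positivity)]
      exact hLM.trans (le_of_eq (by ring))
    have hsM : s ≤ M :=
      liminf_le_of_frequently_le
        (((eventually_ge_atTop 1).mono fun k hk => hratioM k hk).frequently) hbdd_ge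
    rw [hfirst]
    exact ENNReal.ofReal_le_ofReal hsM
end
end

section
/- In the symbolic slicing setup, there exists a constant C₁ > 0 such that for every τ ∈ S and every (ω,η) ∈ {0,…,n₁−1}^ℕ × {0,…,n₂−1}^ℕ, the map π_{τ,ω,η} : X_{τ,ω,η} → [0,1]² is C₁-Lipschitz, where X_{τ,ω,η} carries the metric d(x,y) = m₂^{−min{k ≥ 0 : x_k ≠ y_k}} and [0,1]² the Euclidean metric. -/
open Set Filter
noncomputable section

/-- `x_{k+1}(τ)`: the (0-indexed) `k`-th position where `τ` equals `1`. -/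
def nthOne (τ : ℕ → Bool) (k : ℕ) : ℕ := Nat.nth (fun n => τ n = true) k

/-- The symbolic space `X_{τ,ω,η}`: sequences `((a_n,b_n))_{n≥0}` with
`b_n ∈ Λ_{η_n}`, `a_{x_{k+1}(τ)} ∈ Γ_{ω_k}`, and `a_n = 1` off `Z(τ)`. -/
def Xset (Γ Λ : ℕ → Set ℕ) (τ : ℕ → Bool) (ω η : ℕ → ℕ) : Set (ℕ → ℕ × ℕ) :=
  { c | (∀ n, (c n).2 ∈ Λ (η n)) ∧ (∀ k, (c (nthOne τ k)).1 ∈ Γ (ω k)) ∧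
        (∀ n, τ n = false → (c n).1 = 1) }

/-- The projection `π_{τ,ω,η} : X_{τ,ω,η} → [0,1]²`. -/
def piSym (m₁ m₂ : ℕ) (τ : ℕ → Bool) (c : ℕ → ℕ × ℕ) : ℝ × ℝ :=
  (∑' k : ℕ, ((c (nthOne τ k)).1 : ℝ) / (m₁ : ℝ) ^ (k + 1),
   ∑' k : ℕ, ((c k).2 : ℝ) / (m₂ : ℝ) ^ (k + 1))

/-- The symbolic metric `d(x,y) = m₂^{−min{k : x_k ≠ y_k}}`. -/
def symDist (m₂ : ℕ) (x y : ℕ → ℕ × ℕ) : ℝ :=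
  letI := Classical.dec (x = y)
  if x = y then 0 else ((m₂ : ℝ) ^ sInf { k | x k ≠ y k })⁻¹

private lemma tail_summable {r : ℝ} (h0 : 0 ≤ r) (h1 : r < 1) (N : ℕ) :
    Summable (fun k : ℕ => if k < N then (0:ℝ) else r ^ k) := by
  apply Summable.of_nonneg_of_le _ _ (summable_geometric_of_lt_one h0 h1)
  · intro k; split <;> positivity
  · intro k; split
    · positivity
    · exact le_rfl

private lemma tail_geom {r : ℝ} (h0 : 0 ≤ r) (h1 : r < 1) (N : ℕ) :
    ∑' k : ℕ, (if k < N then (0:ℝ) else r ^ k) = r ^ N * (1 - r)⁻¹ := by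
  have hs := tail_summable h0 h1 N
  have h := (Summable.sum_add_tsum_nat_add N hs).symm
  have h1' : ∀ i ∈ Finset.range N, (if i < N then (0:ℝ) else r ^ i) = 0 := by
    intro i hi; simp [Finset.mem_range.1 hi]
  rw [Finset.sum_congr rfl h1', Finset.sum_const_zero, zero_add] at h
  rw [h]
  have : ∀ i : ℕ, (if i + N < N then (0:ℝ) else r ^ (i + N)) = r ^ N * r ^ i := by
    intro i; rw [if_neg (by omega), pow_add]; ring
  simp_rw [this]
  rw [tsum_mul_left, tsum_geometric_of_lt_one h0 h1]

private lemma count_vseq {θ : ℝ} (hθ0 : 0 < θ) (hθ1 : θ < 1) {t : ℝ}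
    (ht : t ∈ Set.Ico (0:ℝ) 1) (N : ℕ) :
    θ * N - 1 ≤ (Nat.count (fun n => vseq θ t n = true) N : ℝ) := by
  have key : ∀ N : ℕ, (Nat.count (fun n => vseq θ t n = true) N : ℤ) = ⌊t + N * θ⌋ := by
    intro N
    induction N with
    | zero =>
      simpa using (Int.floor_eq_zero_iff.2 (by exact_mod_cast ht)).symm
    | succ N ih =>
      rw [Nat.count_succ]
      have hx : t + (N:ℝ) * θ < ⌊t + (N:ℝ) * θ⌋ + 1 := Int.lt_floor_add_one _
      have hx' : (⌊t + (N:ℝ) * θ⌋ : ℝ) ≤ t + (N:ℝ) * θ := Int.floor_le _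
      have hfr : Int.fract (t + (N:ℝ) * θ) = t + (N:ℝ) * θ - ⌊t + (N:ℝ) * θ⌋ :=
        (Int.self_sub_floor _).symm
      have hcast : t + (((N:ℕ)+1 : ℕ) : ℝ) * θ = (t + (N:ℝ) * θ) + θ := by push_cast; ring
      by_cases hv : vseq θ t N = true
      · have hf : 1 - θ ≤ Int.fract (t + (N:ℝ) * θ) := by simpa [vseq] using hv
        rw [if_pos hv]
        have hfl : ⌊t + (((N:ℕ)+1 : ℕ) : ℝ) * θ⌋ = ⌊t + (N:ℝ) * θ⌋ + 1 := by
          rw [hcast, Int.floor_eq_iff]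
          constructor
          · push_cast; linarith [hfr ▸ hf]
          · push_cast; linarith
        rw [hfl]
        push_cast
        omega
      · have hf : Int.fract (t + (N:ℝ) * θ) < 1 - θ := by
          simp only [vseq, decide_eq_true_eq] at hv; linarith [not_le.1 hv]
        rw [if_neg hv]
        have hfl : ⌊t + (((N:ℕ)+1 : ℕ) : ℝ) * θ⌋ = ⌊t + (N:ℝ) * θ⌋ := by
          rw [hcast, Int.floor_eq_iff]
          constructor
          · linarith
          · push_cast; linarith [hfr ▸ hf]
        rw [hfl]; simpa using ih
  have h3 : t + (N:ℝ)*θ - 1 < (⌊t + (N:ℝ) * θ⌋ : ℝ) := by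
    exact_mod_cast Int.sub_one_lt_floor (t + N * θ)
  have h4 : ((Nat.count (fun n => vseq θ t n = true) N : ℤ) : ℝ) = ((⌊t + (N:ℝ) * θ⌋ : ℤ) : ℝ) := by
    exact_mod_cast key N
  push_cast at h4
  linarith [h3, ht.1, h4.le, h4.ge, mul_nonneg hθ0.le (Nat.cast_nonneg (α := ℝ) N)]

private lemma count_S {θ : ℝ} (hθ0 : 0 < θ) (hθ1 : θ < 1) {τ : ℕ → Bool}
    (hτ : τ ∈ Sset θ) (N : ℕ) :
    θ * N - 1 ≤ (Nat.count (fun n => τ n = true) N : ℝ) := by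
  have hFeq : ∀ σ : ℕ → Bool, (Nat.count (fun n => σ n = true) N : ℝ) =
      ∑ i ∈ Finset.range N, (if σ i = true then (1:ℝ) else 0) := by
    intro σ
    rw [Finset.sum_boole, Nat.count_eq_card_filter_range]
  have hF : Continuous (fun σ : ℕ → Bool =>
      ∑ i ∈ Finset.range N, (if σ i = true then (1:ℝ) else 0)) := by
    apply continuous_finset_sum
    intro i _
    exact (continuous_of_discreteTopology
      (f := fun b : Bool => if b = true then (1:ℝ) else 0)).comp (continuous_apply i)
  have hclosed : IsClosed {σ : ℕ → Bool |
      θ * N - 1 ≤ ∑ i ∈ Finset.range N, (if σ i = true then (1:ℝ) else 0)} :=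
    isClosed_le continuous_const hF
  have hsub : { v : ℕ → Bool | ∃ t ∈ Set.Ico (0 : ℝ) 1, v = vseq θ t } ⊆
      {σ : ℕ → Bool | θ * N - 1 ≤ ∑ i ∈ Finset.range N, (if σ i = true then (1:ℝ) else 0)} := by
    rintro v ⟨t, ht, rfl⟩
    have := count_vseq hθ0 hθ1 ht N
    rwa [hFeq] at this
  have := closure_minimal hsub hclosed hτ
  rwa [hFeq]

private lemma coord_bound {M : ℝ} (hM : 1 < M) {u v : ℕ → ℝ} (hu0 : ∀ k, 0 ≤ u k)
    (hv0 : ∀ k, 0 ≤ v k) (huM : ∀ k, u k ≤ M) (hvM : ∀ k, v k ≤ M) (c : ℕ)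
    (hz : ∀ k, k < c → u k = v k) :
    |(∑' k : ℕ, u k / M ^ (k+1)) - ∑' k : ℕ, v k / M ^ (k+1)| ≤ (1/M)^c * (1 - 1/M)⁻¹ := by
  have hM0 : (0:ℝ) < M := lt_trans one_pos hM
  have hr0 : (0:ℝ) ≤ 1/M := le_of_lt (by exact div_pos one_pos hM0)
  have hr1 : 1/M < 1 := by rw [div_lt_one hM0]; exact hM
  have hpow : ∀ k : ℕ, (0:ℝ) < M ^ (k+1) := fun k => pow_pos hM0 _
  have hterm : ∀ (w : ℕ → ℝ), (∀ k, 0 ≤ w k) → (∀ k, w k ≤ M) →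
      ∀ k, w k / M ^ (k+1) ≤ (1/M)^k := by
    intro w h0 h1 k
    rw [div_le_iff₀ (hpow k), one_div, inv_pow, inv_mul_eq_div, le_div_iff₀ (pow_pos hM0 k),
      pow_succ']
    exact mul_le_mul_of_nonneg_right (h1 k) (pow_nonneg hM0.le k)
  have hnn : ∀ (w : ℕ → ℝ), (∀ k, 0 ≤ w k) → ∀ k, 0 ≤ w k / M ^ (k+1) :=
    fun w h0 k => div_nonneg (h0 k) (hpow k).le
  have hsum : ∀ (w : ℕ → ℝ), (∀ k, 0 ≤ w k) → (∀ k, w k ≤ M) →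
      Summable (fun k : ℕ => w k / M ^ (k+1)) := by
    intro w h0 h1
    exact Summable.of_nonneg_of_le (hnn w h0) (hterm w h0 h1)
      (summable_geometric_of_lt_one hr0 hr1)
  have su := hsum u hu0 huM
  have sv := hsum v hv0 hvM
  rw [← Summable.tsum_sub su sv]
  have hbd : ∀ k : ℕ, |u k / M ^ (k+1) - v k / M ^ (k+1)| ≤
      (if k < c then (0:ℝ) else (1/M)^k) := by
    intro k
    by_cases hk : k < c
    · rw [if_pos hk, hz k hk, sub_self, abs_zero]
    · rw [if_neg hk, abs_sub_le_iff]
      constructor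
      · linarith [hterm u hu0 huM k, hnn v hv0 k]
      · linarith [hterm v hv0 hvM k, hnn u hu0 k]
  have habs : Summable (fun k : ℕ => |u k / M ^ (k+1) - v k / M ^ (k+1)|) :=
    Summable.of_nonneg_of_le (fun k => abs_nonneg _) hbd (tail_summable hr0 hr1 c)
  have h1 : |∑' k : ℕ, (u k / M ^ (k+1) - v k / M ^ (k+1))| ≤
      ∑' k : ℕ, |u k / M ^ (k+1) - v k / M ^ (k+1)| := by
    have := norm_tsum_le_tsum_norm (f := fun k : ℕ => u k / M ^ (k+1) - v k / M ^ (k+1))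
      (by simpa [Real.norm_eq_abs] using habs)
    simpa [Real.norm_eq_abs] using this
  refine h1.trans ((Summable.tsum_le_tsum hbd habs (tail_summable hr0 hr1 c)).trans ?_)
  rw [tail_geom hr0 hr1 c]

private lemma pow_count_le {m₁ m₂ : ℕ} (h2 : 2 ≤ m₂) (hm : m₂ < m₁) {θ : ℝ}
    (hθ : θ = Real.log m₂ / Real.log m₁) {c N : ℕ} (hc : θ * N - 1 ≤ (c:ℝ)) :
    (1/(m₁:ℝ))^c ≤ m₁ * ((m₂:ℝ)^N)⁻¹ := by
  have h1 : (1:ℝ) < m₁ := by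
    have : 1 < m₁ := by omega
    exact_mod_cast this
  have h0 : (0:ℝ) < m₁ := lt_trans one_pos h1
  have h0₂ : (0:ℝ) < m₂ := by positivity
  have hln : Real.log m₁ ≠ 0 := ne_of_gt (Real.log_pos h1)
  have hpow : (m₁:ℝ) ^ θ = m₂ := by
    rw [Real.rpow_def_of_pos h0, hθ, mul_comm, div_mul_cancel₀ _ hln, Real.exp_log h0₂]
  have e1 : (1/(m₁:ℝ))^c = (m₁:ℝ) ^ (-(c:ℝ)) := by
    rw [Real.rpow_neg h0.le, Real.rpow_natCast, one_div, inv_pow]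
  have e2 : (m₁:ℝ) ^ (-(c:ℝ)) ≤ (m₁:ℝ) ^ (1 - θ * N) :=
    (Real.rpow_le_rpow_left_iff h1).2 (by linarith)
  have e3 : (m₁:ℝ) ^ (1 - θ * N) = m₁ * ((m₂:ℝ)^N)⁻¹ := by
    rw [sub_eq_add_neg, Real.rpow_add h0, Real.rpow_one]
    congr 1
    rw [Real.rpow_neg h0.le, Real.rpow_mul h0.le, hpow, Real.rpow_natCast]
  rw [e1]
  exact e2.trans e3.le

/-- The projections `π_{τ,ω,η}` are uniformly Lipschitz. -/
theorem stmt14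
    (m₁ m₂ n₁ n₂ : ℕ) (hm₂ : 2 ≤ m₂) (hm : m₂ < m₁) (hn₁ : 2 ≤ n₁) (hn₂ : 2 ≤ n₂)
    (θ : ℝ) (hθ : θ = Real.log m₂ / Real.log m₁) (hirr : Irrational θ)
    (Γ Λ : ℕ → Set ℕ)
    (hΓ : ∀ i < n₁, (Γ i).Nonempty ∧ Γ i ⊆ Set.Iio m₁)
    (hΛ : ∀ j < n₂, (Λ j).Nonempty ∧ Λ j ⊆ Set.Iio m₂) :
    ∃ C₁ : ℝ, 0 < C₁ ∧
      ∀ τ ∈ Sset θ, ∀ ω η : ℕ → ℕ, (∀ k, ω k < n₁) → (∀ k, η k < n₂) →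
        ∀ x ∈ Xset Γ Λ τ ω η, ∀ y ∈ Xset Γ Λ τ ω η,
          dist (piSym m₁ m₂ τ x) (piSym m₁ m₂ τ y) ≤ C₁ * symDist m₂ x y := by
  have h1m₂ : (1:ℝ) < m₂ := by exact_mod_cast lt_of_lt_of_le one_lt_two hm₂
  have h1m₁ : (1:ℝ) < m₁ := by
    have : 1 < m₁ := by omega
    exact_mod_cast this
  have h0₁ : (0:ℝ) < m₁ := lt_trans one_pos h1m₁
  have h0₂ : (0:ℝ) < m₂ := lt_trans one_pos h1m₂
  have hθ0 : 0 < θ := by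
    rw [hθ]; exact div_pos (Real.log_pos h1m₂) (Real.log_pos h1m₁)
  have hθ1 : θ < 1 := by
    rw [hθ, div_lt_one (Real.log_pos h1m₁)]
    exact Real.log_lt_log h0₂ (by exact_mod_cast hm)
  refine ⟨2 * m₁, by linarith, ?_⟩
  intro τ hτ ω η hω hη x hx y hy
  by_cases hxy : x = y
  · subst hxy
    simp [symDist, dist_self]
  · have hD : {k | x k ≠ y k}.Nonempty := Function.ne_iff.1 hxy
    set N := sInf {k | x k ≠ y k} with hN
    have hlt : ∀ j, j < N → x j = y j := by
      intro j hj
      by_contra h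
      exact (Nat.notMem_of_lt_sInf hj) h
    have hsd : symDist m₂ x y = ((m₂:ℝ)^N)⁻¹ := by
      simp only [symDist]
      rw [if_neg hxy]
    set c := Nat.count (fun n => τ n = true) N with hc
    have hcount : θ * N - 1 ≤ (c:ℝ) := count_S hθ0 hθ1 hτ N
    have hxa : ∀ k, ((x (nthOne τ k)).1 : ℝ) ≤ m₁ := by
      intro k
      exact_mod_cast le_of_lt ((hΓ (ω k) (hω k)).2 (hx.2.1 k))
    have hya : ∀ k, ((y (nthOne τ k)).1 : ℝ) ≤ m₁ := by
      intro k
      exact_mod_cast le_of_lt ((hΓ (ω k) (hω k)).2 (hy.2.1 k))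
    have hxb : ∀ k, ((x k).2 : ℝ) ≤ m₂ := by
      intro k
      exact_mod_cast le_of_lt ((hΛ (η k) (hη k)).2 (hx.1 k))
    have hyb : ∀ k, ((y k).2 : ℝ) ≤ m₂ := by
      intro k
      exact_mod_cast le_of_lt ((hΛ (η k) (hη k)).2 (hy.1 k))
    have hz1 : ∀ k, k < c → ((x (nthOne τ k)).1 : ℝ) = ((y (nthOne τ k)).1 : ℝ) := by
      intro k hk
      have : nthOne τ k < N := Nat.nth_lt_of_lt_count hk
      rw [hlt _ this]
    have hz2 : ∀ k, k < N → ((x k).2 : ℝ) = ((y k).2 : ℝ) := by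
      intro k hk; rw [hlt k hk]
    have hb1 := coord_bound h1m₁ (fun k => Nat.cast_nonneg _) (fun k => Nat.cast_nonneg _)
      hxa hya c hz1
    have hb2 := coord_bound h1m₂ (fun k => Nat.cast_nonneg _) (fun k => Nat.cast_nonneg _)
      hxb hyb N hz2
    have hpowN : (0:ℝ) < (m₂:ℝ)^N := pow_pos h0₂ N
    have hinv2 : ((1:ℝ) - 1/m₂)⁻¹ ≤ 2 := by
      have h12 : (1:ℝ)/m₂ ≤ 1/2 := by
        apply one_div_le_one_div_of_le (by norm_num)
        exact_mod_cast hm₂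
      have : (1:ℝ)/2 ≤ 1 - 1/m₂ := by linarith
      calc ((1:ℝ) - 1/m₂)⁻¹ ≤ ((1:ℝ)/2)⁻¹ := by
            apply inv_anti₀ (by norm_num) this
        _ = 2 := by norm_num
    have hinv1 : ((1:ℝ) - 1/m₁)⁻¹ ≤ 2 := by
      have h12 : (1:ℝ)/m₁ ≤ 1/2 := by
        apply one_div_le_one_div_of_le (by norm_num)
        have : (2:ℝ) < m₁ := by exact_mod_cast lt_of_le_of_lt hm₂ hm
        linarith
      have : (1:ℝ)/2 ≤ 1 - 1/m₁ := by linarith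
      calc ((1:ℝ) - 1/m₁)⁻¹ ≤ ((1:ℝ)/2)⁻¹ := by
            apply inv_anti₀ (by norm_num) this
        _ = 2 := by norm_num
    rw [Prod.dist_eq, hsd]
    apply max_le
    · rw [Real.dist_eq]
      have hd1 : |(piSym m₁ m₂ τ x).1 - (piSym m₁ m₂ τ y).1| ≤ (1/(m₁:ℝ))^c * (1 - 1/(m₁:ℝ))⁻¹ := hb1
      have hp1 : (0:ℝ) ≤ (1/(m₁:ℝ))^c := by positivity
      calc |(piSym m₁ m₂ τ x).1 - (piSym m₁ m₂ τ y).1|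
          ≤ (1/(m₁:ℝ))^c * (1 - 1/(m₁:ℝ))⁻¹ := hd1
        _ ≤ (1/(m₁:ℝ))^c * 2 := mul_le_mul_of_nonneg_left hinv1 hp1
        _ ≤ ((m₁:ℝ) * ((m₂:ℝ)^N)⁻¹) * 2 :=
            mul_le_mul_of_nonneg_right (pow_count_le hm₂ hm hθ hcount) (by norm_num)
        _ = 2 * (m₁:ℝ) * ((m₂:ℝ)^N)⁻¹ := by ring
    · rw [Real.dist_eq]
      have hp2 : (0:ℝ) ≤ (1/(m₂:ℝ))^N := by positivity
      have he : (1/(m₂:ℝ))^N = ((m₂:ℝ)^N)⁻¹ := by rw [one_div, inv_pow]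
      calc |(piSym m₁ m₂ τ x).2 - (piSym m₁ m₂ τ y).2|
          ≤ (1/(m₂:ℝ))^N * (1 - 1/(m₂:ℝ))⁻¹ := hb2
        _ ≤ (1/(m₂:ℝ))^N * 2 := mul_le_mul_of_nonneg_left hinv2 hp2
        _ = 2 * ((m₂:ℝ)^N)⁻¹ := by rw [he]; ring
        _ ≤ 2 * (m₁:ℝ) * ((m₂:ℝ)^N)⁻¹ := by
            have : (1:ℝ) ≤ m₁ := h1m₁.le
            nlinarith [inv_nonneg.2 hpowN.le]
end
end

section
/- In the symbolic slicing setup, there exists a constant C₂ > 0 such that for every τ ∈ S, every (ω,η) ∈ {0,…,n₁−1}^ℕ × {0,…,n₂−1}^ℕ, every subset A ⊆ X_{τ,ω,η}, and every k ∈ ℕ: the number of length-k cylinders of X_{τ,ω,η} (sets determined by fixing the coordinates 0,…,k−1) that intersect A is at most C₂ times the number of closed squares of the grid of side m₂^{−k} (with corners in m₂^{−k}·ℤ²) that intersect π_{τ,ω,η}(A). -/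
open Set Filter
noncomputable section

/-- Truncation to the first `k` coordinates (padding with `(0,0)`); length-`k` cylinders of
a set correspond to points of its image under `trunc k`. -/
def trunc (k : ℕ) (x : ℕ → ℕ × ℕ) : ℕ → ℕ × ℕ := fun i => if i < k then x i else (0, 0)

/-- The closed square of the `m₂^{-k}`-grid indexed by `q ∈ ℤ²`. -/
def gridSq (m₂ k : ℕ) (q : ℤ × ℤ) : Set (ℝ × ℝ) :=
  Set.Icc ((q.1 : ℝ) / (m₂ : ℝ) ^ k, (q.2 : ℝ) / (m₂ : ℝ) ^ k)
    (((q.1 : ℝ) + 1) / (m₂ : ℝ) ^ k, ((q.2 : ℝ) + 1) / (m₂ : ℝ) ^ k)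

/-!
A length-`k` cylinder is determined by two integers: the value `P` of its first `r` horizontal
digits in base `m₁`, `r` being the number of ones of `τ` below `k`, and the value `B` of its first
`k` vertical digits in base `m₂`. For a point `(x, y)` of the cylinder, `m₁ʳ x` and `m₂ᵏ y` lie
within one above `P` and `B`. Since `τ` is a limit of rotation codings, `r ≤ kθ + 1`, that is
`m₁ʳ ≤ m₁ m₂ᵏ`; so the grid square of side `m₂⁻ᵏ` containing `(x, y)` leaves at most `m₁ + 2`
values for `P` and three for `B`.
-/

section DigitPrefix

variable {m : ℕ} {d e : ℕ → ℕ}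

def digitPrefix (m : ℕ) (d : ℕ → ℕ) : ℕ → ℕ
  | 0 => 0
  | n + 1 => m * digitPrefix m d n + d n

theorem digitPrefix_congr {n : ℕ} (h : ∀ i < n, d i = e i) :
    digitPrefix m d n = digitPrefix m e n := by
  induction n with
  | zero => rfl
  | succ n ih =>
    simp only [digitPrefix, ih fun i hi => h i (by omega), h n n.lt_succ_self]

theorem eq_of_digitPrefix_eq {n : ℕ} (hd : ∀ i < n, d i < m) (he : ∀ i < n, e i < m)
    (h : digitPrefix m d n = digitPrefix m e n) : ∀ i < n, d i = e i := by
  induction n with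
  | zero => intro i hi; omega
  | succ n ih =>
    have hdn := hd n n.lt_succ_self
    have hen := he n n.lt_succ_self
    simp only [digitPrefix] at h
    have hlast : d n = e n := by
      simpa [Nat.mul_add_mod, Nat.mod_eq_of_lt hdn, Nat.mod_eq_of_lt hen] using congrArg (· % m) h
    have hinit : digitPrefix m d n = digitPrefix m e n := by
      rw [hlast] at h
      exact Nat.eq_of_mul_eq_mul_left (by omega) (Nat.add_right_cancel h)
    intro i hi
    rcases Nat.lt_succ_iff_lt_or_eq.mp hi with hi | rfl
    · exact ih (fun i hi => hd i (by omega)) (fun i hi => he i (by omega)) hinit i hi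
    · exact hlast

theorem cast_digitPrefix (hm : m ≠ 0) (n : ℕ) :
    (digitPrefix m d n : ℝ) = m ^ n * ∑ i ∈ Finset.range n, (d i : ℝ) / m ^ (i + 1) := by
  induction n with
  | zero => simp [digitPrefix]
  | succ n ih =>
    rw [digitPrefix, Finset.sum_range_succ, mul_add, pow_succ', mul_assoc, ← ih]
    push_cast
    field_simp

theorem tsum_div_pow_eq_ofDigits (hd : ∀ i, d i < m) :
    ∑' i, (d i : ℝ) / m ^ (i + 1) = Real.ofDigits fun i => (⟨d i, hd i⟩ : Fin m) := by
  simp [Real.ofDigits, Real.ofDigitsTerm, div_eq_mul_inv]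

theorem tsum_div_pow_mem_Icc (hd : ∀ i, d i < m) :
    ∑' i, (d i : ℝ) / m ^ (i + 1) ∈ Icc 0 1 := by
  rw [tsum_div_pow_eq_ofDigits hd]
  exact ⟨Real.ofDigits_nonneg _, Real.ofDigits_le_one _⟩

/-- Not `⌊mⁿ x⌋ = digitPrefix m d n`: a tail of maximal digits makes `mⁿ x` the next integer. -/
theorem pow_mul_tsum_div_pow_mem_Icc (hd : ∀ i, d i < m) (n : ℕ) :
    (m : ℝ) ^ n * ∑' i, (d i : ℝ) / m ^ (i + 1) ∈
      Icc (digitPrefix m d n : ℝ) (digitPrefix m d n + 1) := by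
  have hm : m ≠ 0 := (hd 0).ne_bot
  have htail := tsum_div_pow_mem_Icc fun i => hd (i + n)
  rw [tsum_div_pow_eq_ofDigits hd, Real.ofDigits_eq_sum_add_ofDigits _ n,
    mul_add, ← mul_assoc, mul_inv_cancel₀ (by positivity), one_mul]
  rw [tsum_div_pow_eq_ofDigits fun i => hd (i + n)] at htail
  have hsum :
      (m : ℝ) ^ n * ∑ i ∈ Finset.range n, Real.ofDigitsTerm (fun i => (⟨d i, hd i⟩ : Fin m)) i =
        digitPrefix m d n := by
    rw [cast_digitPrefix hm]
    simp [Real.ofDigitsTerm, div_eq_mul_inv]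
  rw [hsum]
  exact ⟨by linarith [htail.1], by linarith [htail.2]⟩

end DigitPrefix

section Rotation

variable {θ : ℝ}

theorem Int.floor_add_eq_ite (hθ : θ ∈ Icc 0 1) (s : ℝ) :
    ⌊s + θ⌋ = ⌊s⌋ + if 1 - θ ≤ Int.fract s then 1 else 0 := by
  have hs := Int.floor_add_fract s
  have := Int.fract_nonneg s
  have := Int.fract_lt_one s
  rw [Int.floor_eq_iff]
  split_ifs with h <;> push_cast <;> constructor <;> linarith [hθ.1, hθ.2]

theorem count_vseq_eq_floor (hθ : θ ∈ Icc 0 1) {t : ℝ} (ht : t ∈ Ico 0 1) (k : ℕ) :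
    (Nat.count (fun n => vseq θ t n = true) k : ℤ) = ⌊t + k * θ⌋ := by
  induction k with
  | zero => simpa using (Int.floor_eq_zero_iff.mpr ht).symm
  | succ k ih =>
    rw [Nat.count_succ, Nat.cast_add, ih, Nat.cast_succ, add_one_mul, ← add_assoc,
      Int.floor_add_eq_ite hθ]
    simp [vseq, apply_ite]

theorem count_le_of_mem_Sset (hθ : θ ∈ Icc 0 1) {τ : ℕ → Bool} (hτ : τ ∈ Sset θ) (k : ℕ) :
    (Nat.count (fun n => τ n = true) k : ℝ) ≤ k * θ + 1 := by
  have hU : IsOpen ((Finset.range k : Set ℕ).pi fun n => ({τ n} : Set Bool)) :=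
    isOpen_set_pi (Finset.finite_toSet _) fun _ _ => isOpen_discrete _
  obtain ⟨_, hagree, t, ht, rfl⟩ :=
    mem_closure_iff.mp hτ _ hU (fun n _ => mem_singleton (τ n))
  calc (Nat.count (fun n => τ n = true) k : ℝ)
      ≤ ((Nat.count (fun n => vseq θ t n = true) k : ℤ) : ℝ) := by
        exact_mod_cast Nat.count_mono_left fun n hn hτn => (hagree n (by simpa using hn)).trans hτn
    _ ≤ t + k * θ := by rw [count_vseq_eq_floor hθ ht]; exact Int.floor_le _
    _ ≤ k * θ + 1 := by linarith [ht.2]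

theorem log_div_log_mem_Icc {a b : ℕ} (ha : 1 ≤ a) (hab : a ≤ b) :
    Real.log a / Real.log b ∈ Icc 0 1 := by
  have ha' : (1 : ℝ) ≤ a := by exact_mod_cast ha
  have hab' : (a : ℝ) ≤ b := by exact_mod_cast hab
  exact ⟨div_nonneg (Real.log_nonneg ha') (Real.log_nonneg (ha'.trans hab')),
    div_le_one_of_le₀ (Real.log_le_log (by linarith) hab') (Real.log_nonneg (ha'.trans hab'))⟩

theorem pow_count_le_of_mem_Sset {m₁ m₂ : ℕ} (hm₂ : 1 ≤ m₂) (hm : m₂ < m₁) {τ : ℕ → Bool}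
    (hτ : τ ∈ Sset (Real.log m₂ / Real.log m₁)) (k : ℕ) :
    m₁ ^ Nat.count (fun n => τ n = true) k ≤ m₁ * m₂ ^ k := by
  have hm₁ : (1 : ℝ) < m₁ := by exact_mod_cast hm₂.trans_lt hm
  have hm₂' : (0 : ℝ) < m₂ := by exact_mod_cast hm₂
  have hlog := Real.log_pos hm₁
  have hcount := count_le_of_mem_Sset (log_div_log_mem_Icc hm₂ hm.le) hτ k
  have hr := mul_le_mul_of_nonneg_right hcount hlog.le
  rw [add_mul, mul_assoc, div_mul_cancel₀ _ hlog.ne'] at hr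
  suffices (m₁ : ℝ) ^ Nat.count (fun n => τ n = true) k ≤ m₁ * m₂ ^ k by exact_mod_cast this
  rw [← Real.log_le_log_iff (by positivity) (by positivity), Real.log_pow, Real.log_mul
    (by positivity) (by positivity), Real.log_pow]
  linarith

end Rotation

theorem Set.ncard_image_le_mul_ncard_image {α β γ : Type*} {A : Set α} (f : α → β) {φ : α → γ}
    (hφ : (φ '' A).Finite) {n : ℕ} (hn : ∀ y, (f '' {a ∈ A | φ a = y}).ncard ≤ n) :
    (f '' A).ncard ≤ n * (φ '' A).ncard := by
  have hcover : f '' A = ⋃ y ∈ hφ.toFinset, f '' {a ∈ A | φ a = y} := by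
    ext b
    simp only [mem_image, Finite.mem_toFinset, mem_iUnion, mem_ofPred_eq, exists_prop]
    constructor
    · rintro ⟨a, ha, rfl⟩
      exact ⟨φ a, ⟨a, ha, rfl⟩, a, ⟨ha, rfl⟩, rfl⟩
    · rintro ⟨-, -, a, ⟨ha, -⟩, rfl⟩
      exact ⟨a, ha, rfl⟩
  rw [hcover, ncard_eq_toFinset_card _ hφ]
  calc _ ≤ ∑ y ∈ hφ.toFinset, (f '' {a ∈ A | φ a = y}).ncard := Finset.set_ncard_biUnion_le _ _
    _ ≤ _ := by simpa [mul_comm] using Finset.sum_le_card_nsmul _ _ n fun y _ => hn y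

theorem Nat.mem_Icc_ceil_of_le {a : ℝ} {P L : ℕ} (h₁ : a ≤ P) (h₂ : P ≤ a + L) :
    P ∈ Finset.Icc ⌈a⌉₊ (⌈a⌉₊ + L) := by
  refine Finset.mem_Icc.mpr ⟨Nat.ceil_le.mpr h₁, ?_⟩
  have : (P : ℝ) ≤ ⌈a⌉₊ + L := h₂.trans (by gcongr; exact Nat.le_ceil a)
  exact_mod_cast this

theorem Nat.mem_Icc_ceil_of_mul_mem_Icc {R M x q : ℝ} {P L : ℕ} (hM : 0 < M) (hR : 0 ≤ R)
    (hRM : R ≤ L * M) (hP : R * x ∈ Icc (P : ℝ) (P + 1)) (hq : M * x ∈ Icc q (q + 1)) :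
    P ∈ Finset.Icc ⌈R * q / M - 1⌉₊ (⌈R * q / M - 1⌉₊ + (L + 1)) := by
  have hx : R * x = R * (M * x) / M := by field_simp
  have hlow : R * q / M ≤ R * x := by
    rw [hx]; gcongr; exact hq.1
  have hup : R * x ≤ R * q / M + L := by
    calc R * x ≤ R * (q + 1) / M := by rw [hx]; gcongr; exact hq.2
      _ = R * q / M + R / M := by ring
      _ ≤ R * q / M + L := by gcongr; rwa [div_le_iff₀ hM]
  apply Nat.mem_Icc_ceil_of_le <;> push_cast <;> linarith [hP.1, hP.2]

section Grid

variable {m k : ℕ}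

theorem mem_gridSq_iff (hm : 0 < m) {q : ℤ × ℤ} {p : ℝ × ℝ} :
    p ∈ gridSq m k q ↔
      (m : ℝ) ^ k * p.1 ∈ Icc (q.1 : ℝ) (q.1 + 1) ∧
        (m : ℝ) ^ k * p.2 ∈ Icc (q.2 : ℝ) (q.2 + 1) := by
  have hmk : (0 : ℝ) < (m : ℝ) ^ k := by positivity
  simp only [gridSq, mem_Icc, Prod.le_def, div_le_iff₀ hmk, le_div_iff₀ hmk]
  constructor <;> rintro ⟨⟨h1, h2⟩, h3, h4⟩ <;> refine ⟨⟨?_, ?_⟩, ?_, ?_⟩ <;> linarith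

def gridFloor (m k : ℕ) (p : ℝ × ℝ) : ℤ × ℤ :=
  (⌊(m : ℝ) ^ k * p.1⌋, ⌊(m : ℝ) ^ k * p.2⌋)

theorem mem_gridSq_gridFloor (hm : 0 < m) (p : ℝ × ℝ) : p ∈ gridSq m k (gridFloor m k p) :=
  (mem_gridSq_iff hm).mpr
    ⟨⟨Int.floor_le _, (Int.lt_floor_add_one _).le⟩, Int.floor_le _, (Int.lt_floor_add_one _).le⟩

theorem Int.mem_Icc_of_mul_mem_Icc {M : ℕ} {p : ℝ} {z : ℤ} (hp : p ∈ Icc 0 1)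
    (hz : M * p ∈ Icc (z : ℝ) (z + 1)) : z ∈ Icc (-1) (M : ℤ) := by
  have hMp : (M : ℝ) * p ≤ M := mul_le_of_le_one_right (by positivity) hp.2
  have : (0 : ℝ) ≤ M * p := mul_nonneg (by positivity) hp.1
  constructor
  · have : ((-1 : ℤ) : ℝ) ≤ z := by push_cast; linarith [hz.2]
    exact_mod_cast this
  · exact_mod_cast hz.1.trans hMp

theorem finite_setOf_gridSq_inter_nonempty (hm : 0 < m) {s : Set (ℝ × ℝ)}
    (hs : s ⊆ Icc 0 1 ×ˢ Icc 0 1) : {q : ℤ × ℤ | (gridSq m k q ∩ s).Nonempty}.Finite := by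
  refine ((finite_Icc (-1) ((m ^ k : ℕ) : ℤ)).prod (finite_Icc (-1) ((m ^ k : ℕ) : ℤ))).subset ?_
  rintro q ⟨p, hpq, hps⟩
  obtain ⟨h1, h2⟩ := (mem_gridSq_iff hm).mp hpq
  push_cast at h1 h2 ⊢
  exact ⟨Int.mem_Icc_of_mul_mem_Icc (hs hps).1 (by exact_mod_cast h1),
    Int.mem_Icc_of_mul_mem_Icc (hs hps).2 (by exact_mod_cast h2)⟩

end Grid

section Symbolic

variable {m₁ m₂ : ℕ} {τ : ℕ → Bool} {ω η : ℕ → ℕ} {k : ℕ}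

theorem Xset_mono {Γ Γ' Λ Λ' : ℕ → Set ℕ} (hΓ : ∀ j, Γ (ω j) ⊆ Γ' (ω j))
    (hΛ : ∀ n, Λ (η n) ⊆ Λ' (η n)) : Xset Γ Λ τ ω η ⊆ Xset Γ' Λ' τ ω η :=
  fun _ ⟨hb, ha, hoff⟩ => ⟨fun n => hΛ n (hb n), fun j => hΓ j (ha j), hoff⟩

theorem piSym_mem_Icc_prod {c : ℕ → ℕ × ℕ}
    (hc : c ∈ Xset (fun _ => Iio m₁) (fun _ => Iio m₂) τ ω η) :
    piSym m₁ m₂ τ c ∈ Icc 0 1 ×ˢ Icc 0 1 :=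
  ⟨tsum_div_pow_mem_Icc hc.2.1, tsum_div_pow_mem_Icc hc.1⟩

def cylinderCode (m₁ m₂ : ℕ) (τ : ℕ → Bool) (k : ℕ) (c : ℕ → ℕ × ℕ) : ℕ × ℕ :=
  (digitPrefix m₁ (fun j => (c (nthOne τ j)).1) (Nat.count (fun n => τ n = true) k),
    digitPrefix m₂ (fun n => (c n).2) k)

theorem cylinderCode_trunc (c : ℕ → ℕ × ℕ) :
    cylinderCode m₁ m₂ τ k (trunc k c) = cylinderCode m₁ m₂ τ k c := by
  refine Prod.ext (digitPrefix_congr fun j hj => ?_) (digitPrefix_congr fun n hn => ?_)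
  · simp [trunc, nthOne, Nat.nth_lt_of_lt_count hj]
  · simp [trunc, hn]

theorem trunc_eq_of_cylinderCode_eq {c c' : ℕ → ℕ × ℕ}
    (hc : c ∈ Xset (fun _ => Iio m₁) (fun _ => Iio m₂) τ ω η)
    (hc' : c' ∈ Xset (fun _ => Iio m₁) (fun _ => Iio m₂) τ ω η)
    (h : cylinderCode m₁ m₂ τ k c = cylinderCode m₁ m₂ τ k c') : trunc k c = trunc k c' := by
  have ha := eq_of_digitPrefix_eq (fun j _ => hc.2.1 j) (fun j _ => hc'.2.1 j) (congrArg Prod.fst h)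
  have hb := eq_of_digitPrefix_eq (fun n _ => hc.1 n) (fun n _ => hc'.1 n) (congrArg Prod.snd h)
  funext n
  by_cases hn : n < k
  · simp only [trunc, if_pos hn]
    refine Prod.ext ?_ (hb n hn)
    by_cases hτn : τ n = true
    · simpa [nthOne, Nat.nth_count (p := fun n => τ n = true) hτn] using
        ha _ (Nat.count_strict_mono hτn hn)
    · rw [Bool.not_eq_true] at hτn
      rw [hc.2.2 n hτn, hc'.2.2 n hτn]
  · simp [trunc, hn]

theorem cylinderCode_injOn :
    InjOn (cylinderCode m₁ m₂ τ k) (trunc k '' Xset (fun _ => Iio m₁) (fun _ => Iio m₂) τ ω η) := by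
  rintro _ ⟨c, hc, rfl⟩ _ ⟨c', hc', rfl⟩ h
  rw [cylinderCode_trunc, cylinderCode_trunc] at h
  exact trunc_eq_of_cylinderCode_eq hc hc' h

theorem ncard_trunc_image_le_of_mapsTo_gridSq (hm₂ : 0 < m₂)
    (hr : m₁ ^ Nat.count (fun n => τ n = true) k ≤ m₁ * m₂ ^ k) {F : Set (ℕ → ℕ × ℕ)}
    (hF : F ⊆ Xset (fun _ => Iio m₁) (fun _ => Iio m₂) τ ω η) {q : ℤ × ℤ}
    (hq : MapsTo (piSym m₁ m₂ τ) F (gridSq m₂ k q)) :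
    (trunc k '' F).ncard ≤ (m₁ + 2) * 3 := by
  set R : ℝ := (m₁ : ℝ) ^ Nat.count (fun n => τ n = true) k
  set M : ℝ := (m₂ : ℝ) ^ k
  set a : ℝ := R * q.1 / M - 1
  set b : ℝ := M * q.2 / M - 1
  have hM : 0 < M := by positivity
  have hRM : R ≤ m₁ * M := by simp only [R, M]; exact_mod_cast hr
  set W : Finset (ℕ × ℕ) :=
    Finset.Icc ⌈a⌉₊ (⌈a⌉₊ + (m₁ + 1)) ×ˢ Finset.Icc ⌈b⌉₊ (⌈b⌉₊ + (1 + 1))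
  have hmaps : ∀ u ∈ trunc k '' F, cylinderCode m₁ m₂ τ k u ∈ (W : Set (ℕ × ℕ)) := by
    rintro _ ⟨c, hc, rfl⟩
    obtain ⟨hx, hy⟩ := (mem_gridSq_iff hm₂).mp (hq hc)
    rw [cylinderCode_trunc, Finset.mem_coe, Finset.mem_product]
    exact ⟨Nat.mem_Icc_ceil_of_mul_mem_Icc hM (by positivity) hRM
        (pow_mul_tsum_div_pow_mem_Icc (hF hc).2.1 _) hx,
      Nat.mem_Icc_ceil_of_mul_mem_Icc hM hM.le (by rw [Nat.cast_one, one_mul])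
        (pow_mul_tsum_div_pow_mem_Icc (hF hc).1 _) hy⟩
  calc (trunc k '' F).ncard ≤ (W : Set (ℕ × ℕ)).ncard :=
        ncard_le_ncard_of_injOn _ hmaps (cylinderCode_injOn.mono (image_mono hF))
    _ = (m₁ + 2) * 3 := by
      simp only [W, ncard_coe_finset, Finset.card_product, Nat.card_Icc, add_assoc,
        Nat.add_sub_cancel_left]
      rfl

theorem ncard_trunc_image_le (hm₂ : 0 < m₂)
    (hr : m₁ ^ Nat.count (fun n => τ n = true) k ≤ m₁ * m₂ ^ k) {A : Set (ℕ → ℕ × ℕ)}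
    (hA : A ⊆ Xset (fun _ => Iio m₁) (fun _ => Iio m₂) τ ω η) :
    (trunc k '' A).ncard ≤
      (m₁ + 2) * 3 * {q : ℤ × ℤ | (gridSq m₂ k q ∩ piSym m₁ m₂ τ '' A).Nonempty}.ncard := by
  set Q := {q : ℤ × ℤ | (gridSq m₂ k q ∩ piSym m₁ m₂ τ '' A).Nonempty}
  set φ := fun c => gridFloor m₂ k (piSym m₁ m₂ τ c)
  have hφQ : φ '' A ⊆ Q := by
    rintro _ ⟨c, hc, rfl⟩
    exact ⟨_, mem_gridSq_gridFloor hm₂ _, c, hc, rfl⟩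
  have hQ : Q.Finite := finite_setOf_gridSq_inter_nonempty hm₂ <| by
    rintro _ ⟨c, hc, rfl⟩
    exact piSym_mem_Icc_prod (hA hc)
  calc (trunc k '' A).ncard ≤ (m₁ + 2) * 3 * (φ '' A).ncard :=
        Set.ncard_image_le_mul_ncard_image (φ := φ) _ (hQ.subset hφQ) fun q =>
          ncard_trunc_image_le_of_mapsTo_gridSq (q := q) hm₂ hr (fun c hc => hA hc.1) <| by
            rintro c ⟨-, hcq⟩
            rw [← hcq]
            exact mem_gridSq_gridFloor hm₂ _
    _ ≤ (m₁ + 2) * 3 * Q.ncard := Nat.mul_le_mul_left _ (ncard_le_ncard hφQ hQ)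

end Symbolic

theorem stmt15_general
    (m₁ m₂ n₁ n₂ : ℕ) (hm₂ : 2 ≤ m₂) (hm : m₂ < m₁)
    (θ : ℝ) (hθ : θ = Real.log m₂ / Real.log m₁)
    (Γ Λ : ℕ → Set ℕ)
    (hΓ : ∀ i < n₁, (Γ i).Nonempty ∧ Γ i ⊆ Set.Iio m₁)
    (hΛ : ∀ j < n₂, (Λ j).Nonempty ∧ Λ j ⊆ Set.Iio m₂) :
    ∃ C₂ : ℝ, 0 < C₂ ∧
      ∀ τ ∈ Sset θ, ∀ ω η : ℕ → ℕ, (∀ k, ω k < n₁) → (∀ k, η k < n₂) →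
        ∀ A ⊆ Xset Γ Λ τ ω η, ∀ k : ℕ,
          ((trunc k '' A).ncard : ℝ) ≤
            C₂ * ({ q : ℤ × ℤ | (gridSq m₂ k q ∩ piSym m₁ m₂ τ '' A).Nonempty }.ncard : ℝ) := by
  subst hθ
  refine ⟨(m₁ + 2) * 3, by positivity, fun τ hτ ω η hω hη A hA k => ?_⟩
  have hX : Xset Γ Λ τ ω η ⊆ Xset (fun _ => Iio m₁) (fun _ => Iio m₂) τ ω η :=
    Xset_mono (fun j => (hΓ _ (hω j)).2) (fun n => (hΛ _ (hη n)).2)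
  exact_mod_cast ncard_trunc_image_le (by omega) (pow_count_le_of_mem_Sset (by omega) hm hτ k)
    (hA.trans hX)

/-- The number of length-`k` cylinders of `X_{τ,ω,η}` meeting `A` is at
most a constant multiple of the number of `m₂^{-k}`-grid squares meeting `π_{τ,ω,η}(A)`. -/
theorem stmt15
    (m₁ m₂ n₁ n₂ : ℕ) (hm₂ : 2 ≤ m₂) (hm : m₂ < m₁) (hn₁ : 2 ≤ n₁) (hn₂ : 2 ≤ n₂)
    (θ : ℝ) (hθ : θ = Real.log m₂ / Real.log m₁) (hirr : Irrational θ)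
    (Γ Λ : ℕ → Set ℕ)
    (hΓ : ∀ i < n₁, (Γ i).Nonempty ∧ Γ i ⊆ Set.Iio m₁)
    (hΛ : ∀ j < n₂, (Λ j).Nonempty ∧ Λ j ⊆ Set.Iio m₂) :
    ∃ C₂ : ℝ, 0 < C₂ ∧
      ∀ τ ∈ Sset θ, ∀ ω η : ℕ → ℕ, (∀ k, ω k < n₁) → (∀ k, η k < n₂) →
        ∀ A ⊆ Xset Γ Λ τ ω η, ∀ k : ℕ,
          ((trunc k '' A).ncard : ℝ) ≤
            C₂ * ({ q : ℤ × ℤ | (gridSq m₂ k q ∩ piSym m₁ m₂ τ '' A).Nonempty }.ncard : ℝ) :=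
  stmt15_general m₁ m₂ n₁ n₂ hm₂ hm θ hθ Γ Λ hΓ hΛ
end
end

section
/- In the symbolic slicing setup, define the family 𝓕 of tuples (A,x,t,τ,ω,η) with t ∈ [0,1), τ ∈ S, ω ∈ {0,…,n₁−1}^ℕ, η ∈ {0,…,n₂−1}^ℕ, and x ∈ A ⊆ X_{τ,ω,η} such that π_{τ,ω,η}(A) ⊆ (π_{m₁}(F̃_ω) × π_{m₂}(Ẽ_η)) ∩ ℓ_{m₁^t, π_{τ,ω,η}(x)}, where ℓ_{u,z} is the line through z with slope u. Then: if (A,x,t,v_t,ω,η) ∈ 𝓕, then (σ(A ∩ [x₀]), σ(x), R_θ(t), σ(v_t), σ_t(ω), σ(η)) ∈ 𝓕, where [x₀] = {y ∈ X_{v_t,ω,η} : y₀ = x₀}, σ denotes the left shift (dropping the first coordinate), R_θ(t) = t + θ (mod 1), and σ_t(ω) = σ(ω) if t ∈ [1−θ,1) and σ_t(ω) = ω if t ∈ [0,1−θ). -/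
open Set Filter
noncomputable section

/-- The line through `z` with slope `u`. -/
def lineThrough (u : ℝ) (z : ℝ × ℝ) : Set (ℝ × ℝ) :=
  { p | p.2 - z.2 = u * (p.1 - z.1) }

/-- Membership in the family `𝓕` of symbolic slices: `x ∈ A ⊆ X_{τ,ω,η}` and
`π_{τ,ω,η}(A) ⊆ (π_{m₁}(F̃_ω) × π_{m₂}(Ẽ_η)) ∩ ℓ_{m₁^t, π_{τ,ω,η}(x)}`. -/
def memF (m₁ m₂ n₁ n₂ : ℕ) (Γ Λ : ℕ → Set ℕ) (θ : ℝ)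
    (A : Set (ℕ → ℕ × ℕ)) (x : ℕ → ℕ × ℕ) (t : ℝ) (τ : ℕ → Bool) (ω η : ℕ → ℕ) : Prop :=
  t ∈ Set.Ico (0 : ℝ) 1 ∧ τ ∈ Sset θ ∧ (∀ k, ω k < n₁) ∧ (∀ k, η k < n₂) ∧
  x ∈ A ∧ A ⊆ Xset Γ Λ τ ω η ∧
  piSym m₁ m₂ τ '' A ⊆
    (prodSet m₁ Γ ω ×ˢ prodSet m₂ Λ η) ∩ lineThrough ((m₁ : ℝ) ^ t) (piSym m₁ m₂ τ x)

/-- The left shift on sequences. -/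
def shiftSeq {X : Type*} (x : ℕ → X) : ℕ → X := fun k => x (k + 1)

/-- `σ_t`: shift if `t ∈ [1−θ,1)`, identity otherwise. -/
def sigmat (θ t : ℝ) (ω : ℕ → ℕ) : ℕ → ℕ :=
  if 1 - θ ≤ t then shiftSeq ω else ω

/-!
Dropping the first symbol is a magnification of the picture. On the second coordinate it is
multiplication by `m₂` followed by a translation by the first digit. On the first coordinate it is
multiplication by `m₁` (again followed by a translation) when `v_t(0) = 1`, and the identity when
`v_t(0) = 0`, because position `0` then carries no `m₁`-digit. Two points with the same first
symbol are translated alike, so a line of slope `m₁^t` goes to a line of slope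
`m₂ m₁^t / m₁^{v_t(0)} = m₁^{t + θ - v_t(0)} = m₁^{R_θ t}`, using `m₁^θ = m₂`. The coding
sequence itself satisfies `σ(v_t) = v_{R_θ t}`.
-/

section Rotation

lemma vseq_zero {θ t : ℝ} (ht : t ∈ Ico (0 : ℝ) 1) : vseq θ t 0 = true ↔ 1 - θ ≤ t := by
  simp [vseq, Int.fract_eq_self.mpr ht]

lemma shiftSeq_vseq (θ t : ℝ) : shiftSeq (vseq θ t) = vseq θ (Int.fract (t + θ)) := by
  funext n
  have h : Int.fract (t + θ) + n * θ = t + (n + 1 : ℕ) * θ - ⌊t + θ⌋ := by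
    rw [Int.fract]; push_cast; ring
  simp only [shiftSeq, vseq, h, Int.fract_sub_intCast]

lemma vseq_mem_Sset (θ : ℝ) {t : ℝ} (ht : t ∈ Ico (0 : ℝ) 1) : vseq θ t ∈ Sset θ :=
  subset_closure ⟨t, ht, rfl⟩

lemma fract_add_of_fract_add_lt_one {s θ : ℝ} (hθ : 0 ≤ θ) (h : Int.fract s + θ < 1) :
    Int.fract (s + θ) = Int.fract s + θ := by
  rw [Int.fract_eq_iff]
  exact ⟨by linarith [Int.fract_nonneg s], h, ⌊s⌋, by rw [Int.fract]; ring⟩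

/-- A rotation by `θ > 0` cannot stay in `[0, 1 − θ)` forever, since there it moves by `+θ`. -/
lemma infinite_setOf_vseq {θ : ℝ} (hθ : 0 < θ) (t : ℝ) : {n | vseq θ t n = true}.Infinite := by
  refine Set.infinite_of_not_bddAbove fun ⟨N, hN⟩ => ?_
  have hlt : ∀ n, N < n → Int.fract (t + n * θ) + θ < 1 := fun n hn => by
    by_contra hge
    exact absurd (hN (show vseq θ t n = true from decide_eq_true (by linarith))) (by omega)
  have hlin : ∀ k : ℕ,
      Int.fract (t + (N + 1 + k : ℕ) * θ) = Int.fract (t + (N + 1 : ℕ) * θ) + k * θ := by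
    intro k
    induction k with
    | zero => simp
    | succ k ih =>
      have hstep : t + (N + 1 + (k + 1) : ℕ) * θ = t + (N + 1 + k : ℕ) * θ + θ := by
        push_cast; ring
      rw [hstep, fract_add_of_fract_add_lt_one hθ.le (hlt _ (by omega)), ih]
      push_cast; ring
  obtain ⟨k, hk⟩ := exists_nat_ge θ⁻¹
  have hkθ : 1 ≤ k * θ := by rwa [inv_le_iff_one_le_mul₀ hθ] at hk
  linarith [hlin k, Int.fract_lt_one (t + (N + 1 + k : ℕ) * θ),
    Int.fract_nonneg (t + (N + 1 : ℕ) * θ)]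

lemma fract_add_eq_ite {t θ : ℝ} (ht : t ∈ Ico (0 : ℝ) 1) (hθ0 : 0 ≤ θ) (hθ1 : θ ≤ 1) :
    Int.fract (t + θ) = if 1 - θ ≤ t then t + θ - 1 else t + θ := by
  split_ifs with h
  · rw [← Int.fract_sub_one, Int.fract_eq_self]; constructor <;> linarith [ht.2]
  · rw [Int.fract_eq_self]; constructor <;> linarith [ht.1]

lemma rpow_fract_add_mul_ite {b t θ : ℝ} (hb : 0 < b) (ht : t ∈ Ico (0 : ℝ) 1) (hθ0 : 0 ≤ θ)
    (hθ1 : θ ≤ 1) : b ^ Int.fract (t + θ) * (if 1 - θ ≤ t then b else 1) = b ^ t * b ^ θ := by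
  rw [fract_add_eq_ite ht hθ0 hθ1, ← Real.rpow_add hb]
  split_ifs
  · rw [Real.rpow_sub hb, Real.rpow_one, div_mul_cancel₀ _ hb.ne']
  · rw [mul_one]

end Rotation

lemma Nat.nth_shift_add_one {p : ℕ → Prop} [DecidablePred p] (hp : {n | p n}.Infinite) (k : ℕ) :
    Nat.nth (fun n => p (n + 1)) k + 1 = Nat.nth p (k + if p 0 then 1 else 0) := by
  have hp' : {n | p (n + 1)}.Infinite := by
    intro hfin
    refine hp (((hfin.image (· + 1)).insert 0).subset fun n hn => ?_)
    cases n with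
    | zero => exact Set.mem_insert _ _
    | succ m => exact Set.mem_insert_of_mem _ ⟨m, hn, rfl⟩
  have hmem : p (Nat.nth (fun n => p (n + 1)) k + 1) := Nat.nth_mem_of_infinite hp' k
  rw [← Nat.nth_count hmem, Nat.count_succ', Nat.count_nth_of_infinite hp']

section Expansion

variable {m : ℕ} {d : ℕ → ℕ}

lemma summable_digits (hm : 1 < m) (hd : ∀ k, d k < m) :
    Summable fun k : ℕ => (d k : ℝ) / (m : ℝ) ^ (k + 1) := by
  have hm' : (1 : ℝ) < m := by exact_mod_cast hm
  refine .of_nonneg_of_le (fun k => by positivity) (fun k => ?_)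
    (summable_geometric_of_lt_one (by positivity) (inv_lt_one_of_one_lt₀ hm'))
  calc (d k : ℝ) / (m : ℝ) ^ (k + 1) ≤ m / (m : ℝ) ^ (k + 1) := by
        gcongr; exact_mod_cast (hd k).le
    _ = (m : ℝ)⁻¹ ^ k := by rw [pow_succ, div_mul_cancel_right₀ (by positivity), inv_pow]

lemma expandIn_shift (hm : 1 < m) (hd : ∀ k, d k < m) :
    expandIn m (fun k => d (k + 1)) = m * expandIn m d - d 0 := by
  have hm0 : (m : ℝ) ≠ 0 := by positivity
  have hpow : ∀ k, (d (k + 1) : ℝ) / (m : ℝ) ^ (k + 1 + 1)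
      = (m : ℝ)⁻¹ * ((d (k + 1) : ℝ) / (m : ℝ) ^ (k + 1)) := fun k => by
    rw [pow_succ _ (k + 1)]; field_simp
  rw [expandIn, expandIn, (summable_digits hm hd).tsum_eq_zero_add, tsum_congr hpow,
    tsum_mul_left]
  field_simp
  ring

end Expansion

section Symbolic

variable {m₁ m₂ : ℕ} {Γ Λ : ℕ → Set ℕ} {τ : ℕ → Bool} {ω η : ℕ → ℕ} {x y : ℕ → ℕ × ℕ}

lemma nthOne_shiftSeq (hτ : {n | τ n = true}.Infinite) (k : ℕ) :
    nthOne (shiftSeq τ) k + 1 = nthOne τ (k + if τ 0 = true then 1 else 0) :=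
  Nat.nth_shift_add_one hτ k

lemma shiftSeq_mem_Xset (hτ : {n | τ n = true}.Infinite) (hy : y ∈ Xset Γ Λ τ ω η) :
    shiftSeq y ∈ Xset Γ Λ (shiftSeq τ) (if τ 0 = true then shiftSeq ω else ω) (shiftSeq η) := by
  obtain ⟨hb, ha, hone⟩ := hy
  refine ⟨fun n => hb (n + 1), fun k => ?_, fun n hn => hone (n + 1) hn⟩
  change (y (nthOne (shiftSeq τ) k + 1)).1 ∈ _
  rw [nthOne_shiftSeq hτ]
  split_ifs
  exacts [ha (k + 1), ha k]

lemma piSym_mem_prodSet (hy : y ∈ Xset Γ Λ τ ω η) :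
    piSym m₁ m₂ τ y ∈ prodSet m₁ Γ ω ×ˢ prodSet m₂ Λ η :=
  ⟨⟨_, hy.2.1, rfl⟩, ⟨_, hy.1, rfl⟩⟩

lemma piSym_shiftSeq_snd (hm₂ : 1 < m₂) (hΛ : ∀ k, Λ (η k) ⊆ Iio m₂)
    (hy : y ∈ Xset Γ Λ τ ω η) :
    (piSym m₁ m₂ (shiftSeq τ) (shiftSeq y)).2 = m₂ * (piSym m₁ m₂ τ y).2 - (y 0).2 :=
  expandIn_shift hm₂ fun k => hΛ k (hy.1 k)

lemma piSym_shiftSeq_fst (hm₁ : 1 < m₁) (hΓ : ∀ k, Γ (ω k) ⊆ Iio m₁)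
    (hτ : {n | τ n = true}.Infinite) (hy : y ∈ Xset Γ Λ τ ω η) :
    (piSym m₁ m₂ (shiftSeq τ) (shiftSeq y)).1 =
      if τ 0 = true then m₁ * (piSym m₁ m₂ τ y).1 - (y 0).1 else (piSym m₁ m₂ τ y).1 := by
  have hfst : (piSym m₁ m₂ (shiftSeq τ) (shiftSeq y)).1
      = expandIn m₁ fun k => (y (nthOne τ (k + if τ 0 = true then 1 else 0))).1 := by
    simp only [piSym, expandIn, shiftSeq, ← nthOne_shiftSeq hτ]
  split_ifs at hfst ⊢ with h0
  · rw [hfst, expandIn_shift hm₁ fun k => hΓ k (hy.2.1 k), nthOne, Nat.nth_zero_of_zero h0]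
    rfl
  · exact hfst

lemma piSym_shiftSeq_mem_lineThrough (hm₁ : 1 < m₁) (hm₂ : 1 < m₂)
    (hΓ : ∀ k, Γ (ω k) ⊆ Iio m₁) (hΛ : ∀ k, Λ (η k) ⊆ Iio m₂) (hτ : {n | τ n = true}.Infinite)
    (hx : x ∈ Xset Γ Λ τ ω η) (hy : y ∈ Xset Γ Λ τ ω η) (h0 : y 0 = x 0) {u u' : ℝ}
    (hu : u' * (if τ 0 = true then (m₁ : ℝ) else 1) = m₂ * u)
    (hline : piSym m₁ m₂ τ y ∈ lineThrough u (piSym m₁ m₂ τ x)) :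
    piSym m₁ m₂ (shiftSeq τ) (shiftSeq y)
      ∈ lineThrough u' (piSym m₁ m₂ (shiftSeq τ) (shiftSeq x)) := by
  simp only [lineThrough, mem_ofPred_eq] at hline ⊢
  rw [piSym_shiftSeq_fst hm₁ hΓ hτ hx, piSym_shiftSeq_fst hm₁ hΓ hτ hy,
    piSym_shiftSeq_snd hm₂ hΛ hx, piSym_shiftSeq_snd hm₂ hΛ hy, h0]
  split_ifs at hu ⊢ <;>
    linear_combination (m₂ : ℝ) * hline - ((piSym m₁ m₂ τ y).1 - (piSym m₁ m₂ τ x).1) * hu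

end Symbolic

theorem stmt17_general
    (m₁ m₂ n₁ n₂ : ℕ) (hm₂ : 2 ≤ m₂) (hm : m₂ < m₁)
    (θ : ℝ) (hθ : θ = Real.log m₂ / Real.log m₁)
    (Γ Λ : ℕ → Set ℕ)
    (hΓ : ∀ i < n₁, (Γ i).Nonempty ∧ Γ i ⊆ Set.Iio m₁)
    (hΛ : ∀ j < n₂, (Λ j).Nonempty ∧ Λ j ⊆ Set.Iio m₂)
    (A : Set (ℕ → ℕ × ℕ)) (x : ℕ → ℕ × ℕ) (t : ℝ) (ω η : ℕ → ℕ)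
    (h : memF m₁ m₂ n₁ n₂ Γ Λ θ A x t (vseq θ t) ω η) :
    memF m₁ m₂ n₁ n₂ Γ Λ θ
      (shiftSeq '' { y ∈ A | y 0 = x 0 }) (shiftSeq x) (Int.fract (t + θ))
      (shiftSeq (vseq θ t)) (sigmat θ t ω) (shiftSeq η) := by
  obtain ⟨ht, -, hω, hη, hxA, hAX, himg⟩ := h
  have hm₁ : 1 < m₁ := by omega
  have hlog₁ : 0 < Real.log m₁ := Real.log_pos (by exact_mod_cast hm₁)
  have hθ0 : 0 < θ := hθ ▸ div_pos (Real.log_pos (by exact_mod_cast hm₂)) hlog₁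
  have hθ1 : θ < 1 := hθ ▸ (div_lt_one hlog₁).mpr
    (Real.log_lt_log (by positivity) (by exact_mod_cast hm))
  have hpow : (m₁ : ℝ) ^ θ = m₂ := by
    rw [hθ, Real.log_div_log, Real.rpow_logb (by positivity) (by exact_mod_cast hm₁.ne')
      (by positivity)]
  have hτ := infinite_setOf_vseq hθ0 t
  have hσ : sigmat θ t ω = if vseq θ t 0 = true then shiftSeq ω else ω := by
    simp only [sigmat, vseq_zero ht]
  have hslope : (m₁ : ℝ) ^ Int.fract (t + θ) * (if vseq θ t 0 = true then (m₁ : ℝ) else 1)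
      = m₂ * (m₁ : ℝ) ^ t := by
    simp only [vseq_zero ht]
    rw [rpow_fract_add_mul_ite (by positivity) ht hθ0.le hθ1.le, hpow, mul_comm]
  have hΓω : ∀ k, Γ (ω k) ⊆ Iio m₁ := fun k => (hΓ _ (hω k)).2
  have hΛη : ∀ k, Λ (η k) ⊆ Iio m₂ := fun k => (hΛ _ (hη k)).2
  refine ⟨⟨Int.fract_nonneg _, Int.fract_lt_one _⟩, shiftSeq_vseq θ t ▸ vseq_mem_Sset θ
    ⟨Int.fract_nonneg _, Int.fract_lt_one _⟩, fun k => ?_, fun k => hη (k + 1),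
    ⟨x, ⟨hxA, rfl⟩, rfl⟩, ?_, ?_⟩
  · rw [hσ]; split_ifs; exacts [hω (k + 1), hω k]
  · rintro _ ⟨y, ⟨hy, -⟩, rfl⟩
    exact hσ ▸ shiftSeq_mem_Xset hτ (hAX hy)
  · rintro _ ⟨_, ⟨y, ⟨hy, hy0⟩, rfl⟩, rfl⟩
    exact ⟨hσ ▸ piSym_mem_prodSet (shiftSeq_mem_Xset hτ (hAX hy)),
      piSym_shiftSeq_mem_lineThrough hm₁ (by omega) hΓω hΛη hτ (hAX hxA) (hAX hy) hy0 hslope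
        (himg ⟨y, hy, rfl⟩).2⟩

/-- The family `𝓕` is invariant under the magnification dynamics:
`(A,x,t,v_t,ω,η) ∈ 𝓕` implies
`(σ(A ∩ [x₀]), σ(x), R_θ(t), σ(v_t), σ_t(ω), σ(η)) ∈ 𝓕`. -/
theorem stmt17
    (m₁ m₂ n₁ n₂ : ℕ) (hm₂ : 2 ≤ m₂) (hm : m₂ < m₁) (hn₁ : 2 ≤ n₁) (hn₂ : 2 ≤ n₂)
    (θ : ℝ) (hθ : θ = Real.log m₂ / Real.log m₁) (hirr : Irrational θ)
    (Γ Λ : ℕ → Set ℕ)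
    (hΓ : ∀ i < n₁, (Γ i).Nonempty ∧ Γ i ⊆ Set.Iio m₁)
    (hΛ : ∀ j < n₂, (Λ j).Nonempty ∧ Λ j ⊆ Set.Iio m₂)
    (A : Set (ℕ → ℕ × ℕ)) (x : ℕ → ℕ × ℕ) (t : ℝ) (ω η : ℕ → ℕ)
    (h : memF m₁ m₂ n₁ n₂ Γ Λ θ A x t (vseq θ t) ω η) :
    memF m₁ m₂ n₁ n₂ Γ Λ θ
      (shiftSeq '' { y ∈ A | y 0 = x 0 }) (shiftSeq x) (Int.fract (t + θ))
      (shiftSeq (vseq θ t)) (sigmat θ t ω) (shiftSeq η) :=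
  stmt17_general m₁ m₂ n₁ n₂ hm₂ hm θ hθ Γ Λ hΓ hΛ A x t ω η h
end
end

section
/- In the product-set setup, let ℓ be a non-principal line with positive slope u, and suppose that for some (ω,η) ∈ {0,…,n₁−1}^ℕ × {0,…,n₂−1}^ℕ the upper box dimension γ of (π_{m₁}(F̃_ω) × π_{m₂}(Ẽ_η)) ∩ ℓ is positive. Then there exist t₀ ∈ [0,1), nonnegative integers n ≤ k with u·m₂^k/m₁^n = m₁^{t₀} ∈ (1, m₁), and a line ℓ' of slope m₁^{t₀} such that the upper box dimension of (π_{m₁}(F̃_{σⁿω}) × π_{m₂}(Ẽ_{σᵏη})) ∩ ℓ' is at least γ. -/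
open Set Filter MeasureTheory Metric
open scoped ENNReal NNReal
noncomputable section

/-- Covering number of `s` by balls of radius `ε`. -/
def coverNum {X : Type*} [PseudoMetricSpace X] (s : Set X) (ε : ℝ) : ℕ∞ :=
  sInf ((fun t : Finset X => (t.card : ℕ∞)) '' { t | s ⊆ ⋃ x ∈ t, Metric.ball x ε })

/-- Upper box (Minkowski) dimension. -/
def upperBoxDim {X : Type*} [PseudoMetricSpace X] (s : Set X) : ℝ :=
  limsup (fun ε : ℝ => Real.log ((coverNum s ε).toNat : ℝ) / Real.log (1 / ε))
    (nhdsWithin 0 (Set.Ioi 0))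

/-!
Write `θ = log m₂ / log m₁` and `c = log_{m₁} u`. As `θ ∈ (0, 1)` is irrational, for large `k`
the number `k θ + c` lies in `[0, k]` and is not an integer (two consecutive values cannot both
be); with `n = ⌊k θ + c⌋` the exponent `t₀ = k θ + c - n` lies in `(0, 1)` and
`u m₂ ^ k / m₁ ^ n = m₁ ^ t₀`.

Fixing the first `n` base-`m₁` digits of `x` and the first `k` base-`m₂` digits of `y` splits the
slice into finitely many pieces, each the image under a 1-Lipschitz map
`(x', y') ↦ (p + x' / m₁ ^ n, q + y' / m₂ ^ k)` of a slice of the shifted product set by a line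
of slope `u m₂ ^ k / m₁ ^ n`. Covering numbers are subadditive over finite unions of 1-Lipschitz
images, and the number of pieces only adds `O(1 / log (1 / ε))` to `log N(ε) / log (1 / ε)`, so
the upper box dimension of the slice is at most that of the largest piece.
-/

open Topology

section CoverNum

variable {X Y : Type*} [PseudoMetricSpace X] [PseudoMetricSpace Y]

lemma coverNum_le_card {s : Set X} {ε : ℝ} {t : Finset X} (h : s ⊆ ⋃ x ∈ t, ball x ε) :
    coverNum s ε ≤ t.card :=
  sInf_le ⟨t, h, rfl⟩

lemma exists_finset_card_eq_coverNum {s : Set X} {ε : ℝ} (h : coverNum s ε ≠ ⊤) :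
    ∃ t : Finset X, (s ⊆ ⋃ x ∈ t, ball x ε) ∧ (t.card : ℕ∞) = coverNum s ε := by
  have hne : ((fun t : Finset X => (t.card : ℕ∞)) ''
      {t | s ⊆ ⋃ x ∈ t, ball x ε}).Nonempty := by
    by_contra hempty
    exact h (by rw [coverNum, not_nonempty_iff_eq_empty.1 hempty, sInf_empty])
  exact csInf_mem hne

lemma coverNum_le_sum_of_subset_iUnion_image {ι : Type*} [Fintype ι] {s : Set X} {ε : ℝ}
    {F : ι → Y → X} {S : ι → Set Y} (hF : ∀ i, LipschitzWith 1 (F i))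
    (hcov : s ⊆ ⋃ i, F i '' S i) (hfin : ∀ i, coverNum (S i) ε ≠ ⊤) :
    coverNum s ε ≤ ∑ i, coverNum (S i) ε := by
  classical
  choose u hu hucard using fun i => exists_finset_card_eq_coverNum (hfin i)
  calc coverNum s ε ≤ (Finset.univ.biUnion fun i => (u i).image (F i)).card := by
        refine coverNum_le_card fun x hx => ?_
        obtain ⟨i, w, hw, rfl⟩ := by simpa using hcov hx
        obtain ⟨y, hy, hwy⟩ := by simpa using hu i hw
        refine mem_iUnion₂.2 ⟨F i y, by simpa using ⟨i, y, hy, rfl⟩, ?_⟩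
        calc dist (F i w) (F i y) ≤ dist w y := by simpa using (hF i).dist_le_mul w y
          _ < ε := hwy
    _ ≤ ∑ i, (((u i).image (F i)).card : ℕ∞) := by exact_mod_cast Finset.card_biUnion_le
    _ ≤ ∑ i, coverNum (S i) ε := Finset.sum_le_sum fun i _ => by
        rw [← hucard i]
        exact_mod_cast Finset.card_image_le

lemma exists_toNat_coverNum_le_card_mul {ι : Type*} [Fintype ι] [Nonempty ι] {s : Set X}
    {ε : ℝ} {F : ι → Y → X} {S : ι → Set Y} (hF : ∀ i, LipschitzWith 1 (F i))
    (hcov : s ⊆ ⋃ i, F i '' S i) (hfin : ∀ i, coverNum (S i) ε ≠ ⊤) :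
    ∃ i, (coverNum s ε).toNat ≤ Fintype.card ι * (coverNum (S i) ε).toNat := by
  obtain ⟨i₀, hi₀⟩ := Finite.exists_max fun i => (coverNum (S i) ε).toNat
  refine ⟨i₀, ENat.toNat_le_of_le_natCast ?_⟩
  calc coverNum s ε ≤ ∑ i, coverNum (S i) ε :=
        coverNum_le_sum_of_subset_iUnion_image hF hcov hfin
    _ ≤ ∑ _i : ι, ((coverNum (S i₀) ε).toNat : ℕ∞) := Finset.sum_le_sum fun i _ => by
        rw [← ENat.natCast_toNat (hfin i)]
        exact_mod_cast hi₀ i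
    _ = (Fintype.card ι * (coverNum (S i₀) ε).toNat : ℕ) := by simp

lemma exists_nat_le_ceil_dist_lt {x ε : ℝ} (hx : x ∈ Icc (0 : ℝ) 1) (hε : 0 < ε) :
    ∃ i ≤ ⌈1 / ε⌉₊, dist x (i * ε) < ε := by
  have hxε : 0 ≤ x / ε := div_nonneg hx.1 hε.le
  refine ⟨⌊x / ε⌋₊, (Nat.floor_le_floor (by gcongr; exact hx.2)).trans (Nat.floor_le_ceil _), ?_⟩
  have hlo : (⌊x / ε⌋₊ : ℝ) * ε ≤ x := (le_div_iff₀ hε).1 (Nat.floor_le hxε)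
  have hhi : x < (⌊x / ε⌋₊ + 1) * ε := (div_lt_iff₀ hε).1 (Nat.lt_floor_add_one _)
  rw [Real.dist_eq, abs_lt]
  constructor <;> linarith

lemma coverNum_le_of_subset_unitSquare {s : Set (ℝ × ℝ)} (hs : s ⊆ Icc 0 1 ×ˢ Icc 0 1) {ε : ℝ}
    (hε : 0 < ε) : coverNum s ε ≤ ((⌈1 / ε⌉₊ + 1) ^ 2 : ℕ) := by
  classical
  let grid : Finset (ℝ × ℝ) := (Finset.range (⌈1 / ε⌉₊ + 1) ×ˢ Finset.range (⌈1 / ε⌉₊ + 1)).image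
    fun p => (p.1 * ε, p.2 * ε)
  calc coverNum s ε ≤ grid.card := by
        refine coverNum_le_card fun p hp => ?_
        obtain ⟨i, hi, hpi⟩ := exists_nat_le_ceil_dist_lt (hs hp).1 hε
        obtain ⟨j, hj, hpj⟩ := exists_nat_le_ceil_dist_lt (hs hp).2 hε
        refine mem_iUnion₂.2 ⟨(i * ε, j * ε), ?_, max_lt hpi hpj⟩
        refine Finset.mem_image.2 ⟨(i, j), ?_, rfl⟩
        simp only [Finset.mem_product, Finset.mem_range]
        omega
    _ ≤ ((⌈1 / ε⌉₊ + 1) ^ 2 : ℕ) := by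
        exact_mod_cast Finset.card_image_le.trans (by simp [sq])

lemma coverNum_ne_top_of_subset_unitSquare {s : Set (ℝ × ℝ)} (hs : s ⊆ Icc 0 1 ×ˢ Icc 0 1)
    {ε : ℝ} (hε : 0 < ε) : coverNum s ε ≠ ⊤ :=
  ne_top_of_le_ne_top (ENat.natCast_ne_top _) (coverNum_le_of_subset_unitSquare hs hε)

end CoverNum

lemma log_natCast_le_log_add_log {a b c : ℕ} (h : a ≤ b * c) :
    Real.log a ≤ Real.log b + Real.log c := by
  rcases Nat.eq_zero_or_pos a with rfl | ha
  · simpa using add_nonneg (Real.log_natCast_nonneg b) (Real.log_natCast_nonneg c)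
  · have hbc : 0 < b * c := ha.trans_le h
    rw [← Real.log_mul (by exact_mod_cast (Nat.pos_of_mul_pos_right hbc).ne')
      (by exact_mod_cast (Nat.pos_of_mul_pos_left hbc).ne')]
    exact Real.log_le_log (by exact_mod_cast ha) (by exact_mod_cast h)

lemma log_one_div_pos {ε : ℝ} (h0 : 0 < ε) (h1 : ε < 1) : 0 < Real.log (1 / ε) := by
  rw [one_div, Real.log_inv]
  exact neg_pos.2 (Real.log_neg h0 h1)

lemma tendsto_div_log_one_div_nhdsGT_zero (a : ℝ) :
    Tendsto (fun ε : ℝ => a / Real.log (1 / ε)) (𝓝[>] 0) (𝓝 0) := by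
  simpa only [one_div, Function.comp_def] using
    tendsto_const_nhds.div_atTop (Real.tendsto_log_atTop.comp tendsto_inv_nhdsGT_zero)

section BoxDim

variable {X Y : Type*} [PseudoMetricSpace X] [PseudoMetricSpace Y]

def logCoverRatio (s : Set X) (ε : ℝ) : ℝ :=
  Real.log (coverNum s ε).toNat / Real.log (1 / ε)

lemma upperBoxDim_eq_limsup_logCoverRatio (s : Set X) :
    upperBoxDim s = limsup (logCoverRatio s) (𝓝[>] 0) :=
  rfl

lemma logCoverRatio_nonneg (s : Set X) {ε : ℝ} (h0 : 0 < ε) (h1 : ε < 1) :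
    0 ≤ logCoverRatio s ε :=
  div_nonneg (Real.log_natCast_nonneg _) (log_one_div_pos h0 h1).le

lemma logCoverRatio_le_three {s : Set (ℝ × ℝ)} (hs : s ⊆ Icc 0 1 ×ˢ Icc 0 1) {ε : ℝ}
    (h0 : 0 < ε) (h1 : ε ≤ 1 / 3) : logCoverRatio s ε ≤ 3 := by
  set r := 1 / ε
  have hr : 3 ≤ r := by rw [le_div_iff₀ h0]; linarith
  have hN : (coverNum s ε).toNat ≤ (⌈r⌉₊ + 1) ^ 2 :=
    ENat.toNat_le_of_le_natCast (coverNum_le_of_subset_unitSquare hs h0)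
  have hgrid : (((⌈r⌉₊ + 1) ^ 2 : ℕ) : ℝ) ≤ r ^ 3 := by
    have hceil : (⌈r⌉₊ : ℝ) + 1 ≤ r + 2 := by linarith [Nat.ceil_lt_add_one (by linarith : 0 ≤ r)]
    calc (((⌈r⌉₊ + 1) ^ 2 : ℕ) : ℝ) = ((⌈r⌉₊ : ℝ) + 1) ^ 2 := by push_cast; ring
      _ ≤ (r + 2) ^ 2 := by gcongr
      _ ≤ r ^ 3 := by nlinarith [mul_nonneg (sub_nonneg.2 hr) (sq_nonneg r)]
  have hN' : Real.log ((coverNum s ε).toNat) ≤ Real.log ((⌈r⌉₊ + 1) ^ 2 : ℕ) := by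
    simpa only [Nat.cast_one, Real.log_one, add_zero] using
      log_natCast_le_log_add_log (c := 1) (by rwa [mul_one])
  have hlog := hN'.trans (Real.log_le_log (by positivity) hgrid)
  rw [Real.log_pow, Nat.cast_ofNat] at hlog
  rwa [logCoverRatio, div_le_iff₀ (log_one_div_pos h0 (by linarith))]

lemma exists_logCoverRatio_le_of_subset_iUnion_image {ι : Type*} [Fintype ι] [Nonempty ι]
    {s : Set X} {ε : ℝ} {F : ι → Y → X} {S : ι → Set Y} (hF : ∀ i, LipschitzWith 1 (F i))
    (hcov : s ⊆ ⋃ i, F i '' S i) (hfin : ∀ i, coverNum (S i) ε ≠ ⊤) (h0 : 0 < ε) (h1 : ε < 1) :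
    ∃ i, logCoverRatio s ε ≤
      Real.log (Fintype.card ι) / Real.log (1 / ε) + logCoverRatio (S i) ε := by
  obtain ⟨i, hi⟩ := exists_toNat_coverNum_le_card_mul hF hcov hfin
  refine ⟨i, ?_⟩
  rw [logCoverRatio, logCoverRatio, ← add_div]
  exact div_le_div_of_nonneg_right (log_natCast_le_log_add_log hi) (log_one_div_pos h0 h1).le

lemma upperBoxDim_le_of_subset_iUnion_image {ι : Type*} [Fintype ι] [Nonempty ι] {s : Set X}
    {F : ι → ℝ × ℝ → X} {S : ι → Set (ℝ × ℝ)} (hF : ∀ i, LipschitzWith 1 (F i))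
    (hS : ∀ i, S i ⊆ Icc 0 1 ×ˢ Icc 0 1) (hcov : s ⊆ ⋃ i, F i '' S i) {c : ℝ}
    (hc : ∀ i, upperBoxDim (S i) ≤ c) : upperBoxDim s ≤ c := by
  refine le_of_forall_pos_le_add fun δ hδ => ?_
  have hsmall : ∀ᶠ ε in 𝓝[>] (0 : ℝ), ε ∈ Ioc 0 (1 / 3) :=
    Ioc_mem_nhdsGT (by norm_num)
  have hS_small : ∀ᶠ ε in 𝓝[>] (0 : ℝ), ∀ i, logCoverRatio (S i) ε < c + δ / 2 :=
    eventually_all.2 fun i => eventually_lt_of_limsup_lt ((hc i).trans_lt (by linarith))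
      (isBoundedUnder_of_eventually_le
        (hsmall.mono fun ε hε => logCoverRatio_le_three (hS i) hε.1 hε.2))
  have hcard_small : ∀ᶠ ε in 𝓝[>] (0 : ℝ),
      Real.log (Fintype.card ι) / Real.log (1 / ε) < δ / 2 :=
    (tendsto_div_log_one_div_nhdsGT_zero _).eventually_lt_const (half_pos hδ)
  have hle : ∀ᶠ ε in 𝓝[>] (0 : ℝ), logCoverRatio s ε ≤ c + δ := by
    filter_upwards [hsmall, hS_small, hcard_small] with ε hε hSε hcardε
    obtain ⟨i, hi⟩ := exists_logCoverRatio_le_of_subset_iUnion_image hF hcov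
      (fun i => coverNum_ne_top_of_subset_unitSquare (hS i) hε.1) hε.1 (by linarith [hε.2])
    linarith [hSε i]
  have hnonneg : ∀ᶠ ε in 𝓝[>] (0 : ℝ), 0 ≤ logCoverRatio s ε :=
    hsmall.mono fun ε hε => logCoverRatio_nonneg s hε.1 (by linarith [hε.2])
  rw [upperBoxDim_eq_limsup_logCoverRatio]
  exact limsup_le_of_le (isCoboundedUnder_le_of_eventually_le _ hnonneg) hle

end BoxDim

section Digits

variable {m : ℕ} {Γ : ℕ → Set ℕ} {ω : ℕ → ℕ}

lemma expandIn_eq_ofDigits {d : ℕ → ℕ} (hd : ∀ k, d k < m) :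
    expandIn m d = Real.ofDigits fun k => (⟨d k, hd k⟩ : Fin m) := by
  simp only [expandIn, Real.ofDigits, Real.ofDigitsTerm, div_eq_mul_inv]

lemma prodSet_subset_Icc (hΓ : ∀ k, Γ (ω k) ⊆ Iio m) : prodSet m Γ ω ⊆ Icc 0 1 := by
  rintro _ ⟨d, hd, rfl⟩
  rw [expandIn_eq_ofDigits fun k => hΓ k (hd k)]
  exact ⟨Real.ofDigits_nonneg _, Real.ofDigits_le_one _⟩

def prefixValue {n : ℕ} (w : Fin n → Fin m) : ℝ :=
  ∑ i, (w i : ℝ) / (m : ℝ) ^ ((i : ℕ) + 1)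

lemma exists_prefixValue_add_of_mem_prodSet (hΓ : ∀ k, Γ (ω k) ⊆ Iio m) (n : ℕ) {x : ℝ}
    (hx : x ∈ prodSet m Γ ω) :
    ∃ w : Fin n → Fin m, ∃ y ∈ prodSet m Γ (fun i => ω (i + n)),
      x = prefixValue w + y / (m : ℝ) ^ n := by
  obtain ⟨d, hd, rfl⟩ := hx
  have hdm : ∀ k, d k < m := fun k => hΓ k (hd k)
  refine ⟨fun i => ⟨d i, hdm i⟩, expandIn m fun i => d (i + n), ⟨_, fun k => hd (k + n), rfl⟩, ?_⟩
  rw [expandIn_eq_ofDigits hdm, expandIn_eq_ofDigits fun k => hdm (k + n),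
    Real.ofDigits_eq_sum_add_ofDigits _ n, prefixValue,
    Fin.sum_univ_eq_sum_range (fun i => (d i : ℝ) / (m : ℝ) ^ (i + 1)) n]
  simp only [Real.ofDigitsTerm, div_eq_mul_inv]
  ring

end Digits

lemma lipschitzWith_one_const_add_div {M : ℝ} (hM : 1 ≤ M) (a : ℝ) :
    LipschitzWith 1 fun x : ℝ => a + x / M :=
  LipschitzWith.of_dist_le_mul fun x y => by
    rw [Real.dist_eq, Real.dist_eq, add_sub_add_left_eq_sub, ← sub_div, abs_div,
      abs_of_pos (by linarith : 0 < M), NNReal.coe_one, one_mul]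
    exact div_le_self (abs_nonneg _) hM

section Slice

variable {m₁ m₂ : ℕ} {Γ Λ : ℕ → Set ℕ} {ω η : ℕ → ℕ}

def rescaleByPrefix {n k : ℕ} (w : (Fin n → Fin m₁) × (Fin k → Fin m₂)) (q : ℝ × ℝ) : ℝ × ℝ :=
  (prefixValue w.1 + q.1 / (m₁ : ℝ) ^ n, prefixValue w.2 + q.2 / (m₂ : ℝ) ^ k)

lemma lipschitzWith_rescaleByPrefix (hm₁ : 0 < m₁) (hm₂ : 0 < m₂) {n k : ℕ}
    (w : (Fin n → Fin m₁) × (Fin k → Fin m₂)) : LipschitzWith 1 (rescaleByPrefix w) := by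
  have h₁ := lipschitzWith_one_const_add_div
    (one_le_pow₀ (n := n) (by exact_mod_cast hm₁ : (1 : ℝ) ≤ m₁)) (prefixValue w.1)
  have h₂ := lipschitzWith_one_const_add_div
    (one_le_pow₀ (n := k) (by exact_mod_cast hm₂ : (1 : ℝ) ≤ m₂)) (prefixValue w.2)
  have h := (h₁.comp LipschitzWith.prod_fst).prodMk (h₂.comp LipschitzWith.prod_snd)
  rw [mul_one, max_self] at h
  exact h

lemma slice_subset_iUnion_rescaleByPrefix (hm₁ : 0 < m₁) (hm₂ : 0 < m₂)
    (hΓ : ∀ i, Γ (ω i) ⊆ Iio m₁) (hΛ : ∀ j, Λ (η j) ⊆ Iio m₂) (u b : ℝ) (n k : ℕ) :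
    (prodSet m₁ Γ ω ×ˢ prodSet m₂ Λ η) ∩ lineSl u b ⊆
      ⋃ w : (Fin n → Fin m₁) × (Fin k → Fin m₂), rescaleByPrefix w ''
        ((prodSet m₁ Γ (fun i => ω (i + n)) ×ˢ prodSet m₂ Λ (fun i => η (i + k))) ∩
          lineSl (u * (m₂ : ℝ) ^ k / (m₁ : ℝ) ^ n)
            ((m₂ : ℝ) ^ k * (u * prefixValue w.1 + b - prefixValue w.2))) := by
  rintro ⟨X, Y⟩ ⟨⟨hX, hY⟩, hXY⟩
  obtain ⟨w₁, x, hx, rfl⟩ := exists_prefixValue_add_of_mem_prodSet hΓ n hX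
  obtain ⟨w₂, y, hy, rfl⟩ := exists_prefixValue_add_of_mem_prodSet hΛ k hY
  refine mem_iUnion.2 ⟨(w₁, w₂), (x, y), ⟨⟨hx, hy⟩, ?_⟩, rfl⟩
  have hXY' : prefixValue w₂ + y / (m₂ : ℝ) ^ k = u * (prefixValue w₁ + x / (m₁ : ℝ) ^ n) + b :=
    hXY
  have : (m₁ : ℝ) ≠ 0 := by exact_mod_cast hm₁.ne'
  have : (m₂ : ℝ) ≠ 0 := by exact_mod_cast hm₂.ne'
  show y = _
  field_simp at hXY' ⊢
  linear_combination hXY'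

end Slice

lemma exists_upperBoxDim_slice_le_shift {m₁ m₂ : ℕ} {Γ Λ : ℕ → Set ℕ} {ω η : ℕ → ℕ}
    (hm₁ : 0 < m₁) (hm₂ : 0 < m₂) (hΓ : ∀ i, Γ (ω i) ⊆ Iio m₁) (hΛ : ∀ j, Λ (η j) ⊆ Iio m₂)
    (u b : ℝ) (n k : ℕ) :
    ∃ b', upperBoxDim ((prodSet m₁ Γ ω ×ˢ prodSet m₂ Λ η) ∩ lineSl u b) ≤
      upperBoxDim ((prodSet m₁ Γ (fun i => ω (i + n)) ×ˢ prodSet m₂ Λ (fun i => η (i + k))) ∩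
        lineSl (u * (m₂ : ℝ) ^ k / (m₁ : ℝ) ^ n) b') := by
  have : Nonempty (Fin m₁) := ⟨⟨0, hm₁⟩⟩
  have : Nonempty (Fin m₂) := ⟨⟨0, hm₂⟩⟩
  let intercept (w : (Fin n → Fin m₁) × (Fin k → Fin m₂)) : ℝ :=
    (m₂ : ℝ) ^ k * (u * prefixValue w.1 + b - prefixValue w.2)
  obtain ⟨w, hw⟩ := Finite.exists_max fun w => upperBoxDim
    ((prodSet m₁ Γ (fun i => ω (i + n)) ×ˢ prodSet m₂ Λ (fun i => η (i + k))) ∩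
      lineSl (u * (m₂ : ℝ) ^ k / (m₁ : ℝ) ^ n) (intercept w))
  refine ⟨intercept w, upperBoxDim_le_of_subset_iUnion_image
    (lipschitzWith_rescaleByPrefix hm₁ hm₂) (fun _ => ?_)
    (slice_subset_iUnion_rescaleByPrefix hm₁ hm₂ hΓ hΛ u b n k) hw⟩
  exact inter_subset_left.trans <| prod_mono (prodSet_subset_Icc fun i => hΓ (i + n))
    (prodSet_subset_Icc fun j => hΛ (j + k))

lemma Irrational.exists_ge_mul_add_ne_int {θ : ℝ} (hθ : Irrational θ) (c : ℝ) (K : ℕ) :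
    ∃ k ≥ K, ∀ z : ℤ, k * θ + c ≠ z := by
  by_contra! h
  obtain ⟨z₁, h₁⟩ := h K le_rfl
  obtain ⟨z₂, h₂⟩ := h (K + 1) K.le_succ
  exact hθ.ne_int (z₂ - z₁) (by push_cast at h₂ ⊢; linarith)

lemma Irrational.exists_le_mul_add_sub_mem_Ioo {θ : ℝ} (hθ : Irrational θ) (hθ0 : 0 < θ)
    (hθ1 : θ < 1) (c : ℝ) : ∃ n k : ℕ, n ≤ k ∧ k * θ + c - n ∈ Ioo 0 1 := by
  obtain ⟨K, hK⟩ := exists_nat_gt (|c| / θ + |c| / (1 - θ))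
  have hKθ : |c| ≤ K * θ := by
    rw [← div_le_iff₀ hθ0]
    linarith [div_nonneg (abs_nonneg c) (sub_pos.2 hθ1).le]
  have hK1θ : |c| ≤ K * (1 - θ) := by
    rw [← div_le_iff₀ (sub_pos.2 hθ1)]
    linarith [div_nonneg (abs_nonneg c) hθ0.le]
  obtain ⟨k, hkK, hnot⟩ := hθ.exists_ge_mul_add_ne_int c K
  have hkK' : (K : ℝ) ≤ k := by exact_mod_cast hkK
  set x := k * θ + c
  have hx0 : 0 ≤ x := by nlinarith [neg_abs_le c]
  have hxk : x ≤ k := by nlinarith [le_abs_self c]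
  refine ⟨⌊x⌋₊, k, Nat.floor_le_of_le hxk, ?_, by linarith [Nat.lt_floor_add_one x]⟩
  refine sub_pos.2 ((Nat.floor_le hx0).lt_of_ne fun h => hnot ⌊x⌋₊ ?_)
  exact_mod_cast h.symm

lemma mul_pow_div_pow_eq_rpow_logb {a x u : ℝ} (ha : 0 < a) (ha1 : a ≠ 1) (hx : 0 < x)
    (hu : 0 < u) (n k : ℕ) :
    u * x ^ k / a ^ n = a ^ (k * Real.logb a x + Real.logb a u - n) := by
  rw [Real.rpow_sub ha, Real.rpow_add ha, mul_comm (k : ℝ), Real.rpow_mul_natCast ha.le,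
    Real.rpow_logb ha ha1 hx, Real.rpow_logb ha ha1 hu, Real.rpow_natCast]
  ring

theorem stmt18_general
    (m₁ m₂ n₁ n₂ : ℕ) (hm₂ : 2 ≤ m₂) (hm : m₂ < m₁)
    (hirr : Irrational (Real.log m₂ / Real.log m₁))
    (Γ Λ : ℕ → Set ℕ)
    (hΓ : ∀ i < n₁, (Γ i).Nonempty ∧ Γ i ⊆ Set.Iio m₁)
    (hΛ : ∀ j < n₂, (Λ j).Nonempty ∧ Λ j ⊆ Set.Iio m₂)
    (ω η : ℕ → ℕ) (hω : ∀ k, ω k < n₁) (hη : ∀ k, η k < n₂)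
    (u b : ℝ) (hu : 0 < u)
    (γ : ℝ) (hγ : γ = upperBoxDim ((prodSet m₁ Γ ω ×ˢ prodSet m₂ Λ η) ∩ lineSl u b)) :
    ∃ (t₀ : ℝ) (n k : ℕ) (b' : ℝ),
      t₀ ∈ Set.Ico (0 : ℝ) 1 ∧ n ≤ k ∧
      u * (m₂ : ℝ) ^ k / (m₁ : ℝ) ^ n = (m₁ : ℝ) ^ t₀ ∧
      (1 : ℝ) < (m₁ : ℝ) ^ t₀ ∧ (m₁ : ℝ) ^ t₀ < (m₁ : ℝ) ∧
      γ ≤ upperBoxDim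
        ((prodSet m₁ Γ (fun i => ω (i + n)) ×ˢ prodSet m₂ Λ (fun i => η (i + k))) ∩
          lineSl ((m₁ : ℝ) ^ t₀) b') := by
  have hm₁ : (1 : ℝ) < m₁ := by exact_mod_cast (by omega : 1 < m₁)
  have hlog₁ : 0 < Real.log m₁ := Real.log_pos hm₁
  have hθ0 : 0 < Real.log m₂ / Real.log m₁ :=
    div_pos (Real.log_pos (by exact_mod_cast (by omega : 1 < m₂))) hlog₁
  have hθ1 : Real.log m₂ / Real.log m₁ < 1 :=
    (div_lt_one hlog₁).2 (Real.log_lt_log (by positivity) (by exact_mod_cast hm))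
  obtain ⟨n, k, hnk, ht₀⟩ := hirr.exists_le_mul_add_sub_mem_Ioo hθ0 hθ1 (Real.logb m₁ u)
  have hslope := mul_pow_div_pow_eq_rpow_logb (by positivity) hm₁.ne'
    (by positivity : (0 : ℝ) < m₂) hu n k
  obtain ⟨b', hb'⟩ := exists_upperBoxDim_slice_le_shift (by omega) (by omega)
    (fun i => (hΓ _ (hω i)).2) (fun j => (hΛ _ (hη j)).2) u b n k
  exact ⟨_, n, k, b', ⟨ht₀.1.le, ht₀.2⟩, hnk, hslope, Real.one_lt_rpow hm₁ ht₀.1,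
    Real.rpow_lt_self_of_one_lt hm₁ ht₀.2, hγ ▸ hslope ▸ hb'⟩

/-- Reduction of a positive-dimensional slice of a product set to a slice
of slope `m₁^{t₀} ∈ (1, m₁)` of a shifted product set, of at least the same dimension. -/
theorem stmt18
    (m₁ m₂ n₁ n₂ : ℕ) (hm₂ : 2 ≤ m₂) (hm : m₂ < m₁) (hn₁ : 2 ≤ n₁) (hn₂ : 2 ≤ n₂)
    (hirr : Irrational (Real.log m₂ / Real.log m₁))
    (Γ Λ : ℕ → Set ℕ)
    (hΓ : ∀ i < n₁, (Γ i).Nonempty ∧ Γ i ⊆ Set.Iio m₁)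
    (hΛ : ∀ j < n₂, (Λ j).Nonempty ∧ Λ j ⊆ Set.Iio m₂)
    (ω η : ℕ → ℕ) (hω : ∀ k, ω k < n₁) (hη : ∀ k, η k < n₂)
    (u b : ℝ) (hu : 0 < u)
    (γ : ℝ) (hγ : γ = upperBoxDim ((prodSet m₁ Γ ω ×ˢ prodSet m₂ Λ η) ∩ lineSl u b))
    (hγpos : 0 < γ) :
    ∃ (t₀ : ℝ) (n k : ℕ) (b' : ℝ),
      t₀ ∈ Set.Ico (0 : ℝ) 1 ∧ n ≤ k ∧
      u * (m₂ : ℝ) ^ k / (m₁ : ℝ) ^ n = (m₁ : ℝ) ^ t₀ ∧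
      (1 : ℝ) < (m₁ : ℝ) ^ t₀ ∧ (m₁ : ℝ) ^ t₀ < (m₁ : ℝ) ∧
      γ ≤ upperBoxDim
        ((prodSet m₁ Γ (fun i => ω (i + n)) ×ˢ prodSet m₂ Λ (fun i => η (i + k))) ∩
          lineSl ((m₁ : ℝ) ^ t₀) b') :=
  stmt18_general m₁ m₂ n₁ n₂ hm₂ hm hirr Γ Λ hΓ hΛ ω η hω hη u b hu γ hγ
end
end
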